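/- arXiv:1911.05169 — 9 statements merged into one kernel-verified Lean document; each statement's English description precedes it below -/
import Mathlib

section
/- Let G be a finite simple undirected graph with eigenvalues λ_1, …, λ_n and spectral radius ρ = max_i |λ_i|, and let m_k = Σ_{l=1}^n α_l λ_l^k be a spectral moment sequence of G with nonnegative weights α_l. For s, k ∈ ℕ define the 2×2 matrices H = [[m_{2s}, m_{2s+k}],[m_{2s+k}, m_{2s+2k}]] and S = [[m_{2s+k}, m_{2s+2k}],[m_{2s+2k}, m_{2s+3k}]]. If det(H) ≠ 0, then ρ^{2k} · det(H) ≥ det(S). -/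
open Matrix Finset

/-- Lemma 3.5 of the paper: for a spectral moment sequence `m` of a graph `G` with spectral
radius `rho`, if the 2×2 Hankel minor `H` has nonzero determinant, then
`rho ^ (2k) * det H ≥ det S` for the shifted minor `S`. -/
theorem stmt_3 (n : ℕ) (hn : 1 ≤ n) (G : SimpleGraph (Fin n)) [DecidableRel G.Adj]
    (lam : Fin n → ℝ) (U : Matrix (Fin n) (Fin n) ℝ)
    (hU : Uᵀ * U = 1)
    (hAU : G.adjMatrix ℝ * U = U * Matrix.diagonal lam)
    (rho : ℝ) (hrho : IsGreatest (Set.range fun l => |lam l|) rho)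
    (α : Fin n → ℝ) (hα : ∀ l, 0 ≤ α l)
    (m : ℕ → ℝ) (hm : ∀ k, m k = ∑ l, α l * lam l ^ k)
    (s k : ℕ)
    (hH : (!![m (2*s), m (2*s+k); m (2*s+k), m (2*s+2*k)]).det ≠ 0) :
    (!![m (2*s+k), m (2*s+2*k); m (2*s+2*k), m (2*s+3*k)]).det ≤
      rho ^ (2*k) * (!![m (2*s), m (2*s+k); m (2*s+k), m (2*s+2*k)]).det := by
  set r : ℝ := rho ^ (2*k) with hr
  set β : Fin n → ℝ := fun l => α l * lam l ^ (2*s) with hβ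
  set x : Fin n → ℝ := fun l => lam l ^ k with hx
  have hβ0 : ∀ l, 0 ≤ β l := fun l =>
    mul_nonneg (hα l) (by rw [two_mul, pow_add]; exact mul_self_nonneg _)
  have hrhonn : 0 ≤ rho := by
    obtain ⟨l, hl⟩ := hrho.1
    rw [← hl]; exact abs_nonneg _
  have hxr : ∀ i j, x i * x j ≤ r := by
    intro i j
    have hi : |lam i| ≤ rho := hrho.2 ⟨i, rfl⟩
    have hj : |lam j| ≤ rho := hrho.2 ⟨j, rfl⟩
    calc x i * x j ≤ |x i * x j| := le_abs_self _
      _ = |lam i| ^ k * |lam j| ^ k := by rw [abs_mul, hx, abs_pow, abs_pow]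
      _ ≤ rho ^ k * rho ^ k :=
          mul_le_mul (pow_le_pow_left₀ (abs_nonneg _) hi k)
            (pow_le_pow_left₀ (abs_nonneg _) hj k) (by positivity) (by positivity)
      _ = r := by rw [hr, two_mul, pow_add]
  -- the four moment sums
  have hm0 : m (2*s) = ∑ l, β l := by
    rw [hm]
  have hm1 : m (2*s+k) = ∑ l, β l * x l := by
    rw [hm]; exact Finset.sum_congr rfl fun l _ => by rw [pow_add]; ring
  have hm2 : m (2*s+2*k) = ∑ l, β l * x l ^ 2 := by
    rw [hm]; exact Finset.sum_congr rfl fun l _ => by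
      rw [pow_add, ← pow_mul, mul_comm k 2]; ring
  have hm3 : m (2*s+3*k) = ∑ l, β l * x l ^ 3 := by
    rw [hm]; exact Finset.sum_congr rfl fun l _ => by
      rw [pow_add, ← pow_mul, mul_comm k 3]; ring
  have key : 0 ≤ ∑ i, ∑ j, β i * β j * (x i - x j) ^ 2 * (r - x i * x j) :=
    Finset.sum_nonneg fun i _ => Finset.sum_nonneg fun j _ =>
      mul_nonneg (mul_nonneg (mul_nonneg (hβ0 i) (hβ0 j)) (sq_nonneg _))
        (sub_nonneg.2 (hxr i j))
  set S0 := ∑ l, β l with hS0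
  set S1 := ∑ l, β l * x l with hS1
  set S2 := ∑ l, β l * x l ^ 2 with hS2
  set S3 := ∑ l, β l * x l ^ 3 with hS3
  have inner : ∀ i, (∑ j, β i * β j * (x i - x j) ^ 2 * (r - x i * x j))
      = β i * (r * x i ^ 2) * S0 - β i * (x i ^ 3 + 2*r*x i) * S1
        + β i * (r + 2 * x i ^ 2) * S2 - β i * x i * S3 := by
    intro i
    rw [hS0, hS1, hS2, hS3, Finset.mul_sum, Finset.mul_sum, Finset.mul_sum, Finset.mul_sum,
      ← Finset.sum_sub_distrib, ← Finset.sum_add_distrib, ← Finset.sum_sub_distrib]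
    exact Finset.sum_congr rfl fun j _ => by ring
  have expand : (∑ i, ∑ j, β i * β j * (x i - x j) ^ 2 * (r - x i * x j))
      = 2 * (r * (S0 * S2 - S1 * S1) - (S1 * S3 - S2 * S2)) := by
    calc (∑ i, ∑ j, β i * β j * (x i - x j) ^ 2 * (r - x i * x j))
        = ∑ i, (β i * (r * x i ^ 2) * S0 - β i * (x i ^ 3 + 2*r*x i) * S1
            + β i * (r + 2 * x i ^ 2) * S2 - β i * x i * S3) :=
          Finset.sum_congr rfl fun i _ => inner i
      _ = (∑ i, β i * (r * x i ^ 2)) * S0 - (∑ i, β i * (x i ^ 3 + 2*r*x i)) * S1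
            + (∑ i, β i * (r + 2 * x i ^ 2)) * S2 - (∑ i, β i * x i) * S3 := by
          rw [Finset.sum_sub_distrib, Finset.sum_add_distrib, Finset.sum_sub_distrib,
            Finset.sum_mul, Finset.sum_mul, Finset.sum_mul, Finset.sum_mul]
      _ = (r * S2) * S0 - (S3 + 2*r*S1) * S1 + (r * S0 + 2 * S2) * S2 - S1 * S3 := by
          have hA : (∑ i, β i * (r * x i ^ 2)) = r * S2 := by
            rw [hS2, Finset.mul_sum]; exact Finset.sum_congr rfl fun i _ => by ring
          have hB : (∑ i, β i * (x i ^ 3 + 2*r*x i)) = S3 + 2*r*S1 := by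
            rw [hS3, hS1, Finset.mul_sum, ← Finset.sum_add_distrib]
            exact Finset.sum_congr rfl fun i _ => by ring
          have hC : (∑ i, β i * (r + 2 * x i ^ 2)) = r * S0 + 2 * S2 := by
            rw [hS0, hS2, Finset.mul_sum, Finset.mul_sum, ← Finset.sum_add_distrib]
            exact Finset.sum_congr rfl fun i _ => by ring
          rw [hA, hB, hC, ← hS1]
      _ = 2 * (r * (S0 * S2 - S1 * S1) - (S1 * S3 - S2 * S2)) := by ring
  rw [Matrix.det_fin_two_of, Matrix.det_fin_two_of, hm0, hm1, hm2, hm3]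
  rw [expand] at key
  nlinarith [key]
end

section
/- Let G be a finite simple undirected graph with eigenvalues λ_1, …, λ_n and spectral radius ρ = max_i |λ_i|, and let m_k = Σ_{l=1}^n α_l λ_l^k be a spectral moment sequence of G with nonnegative weights α_l. For s, k ∈ ℕ with k ≥ 1, define H = [[m_{2s}, m_{2s+k}],[m_{2s+k}, m_{2s+2k}]], S = [[m_{2s+k}, m_{2s+2k}],[m_{2s+2k}, m_{2s+3k}]], and F = [[m_{2s+k}, m_{2s+3k}],[m_{2s}, m_{2s+2k}]]. If det(H) ≠ 0, then 2·det(H)·ρ^k ≥ |det(F)| + sqrt((det F)^2 − 4·det(H)·det(S)), where sqrt denotes the real square root with the convention sqrt(x) = 0 for x < 0 (as in Lean's Real.sqrt). -/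
open Matrix Finset

/-! With `β l = α l λ_l ^ (2s) ≥ 0` and `x l = λ_l ^ k ∈ [-ρ^k, ρ^k]` one has
`m (2s + jk) = ∑ β x^j`. The quadratic `q(t) = det H t^2 + det F t + det S` equals
`½ ∑ᵢ ∑ⱼ β_i β_j (t - x_i) (t - x_j) (x_i - x_j)^2`, so `q(±ρ^k) ≥ 0`, and
`q'(t) = ∑ᵢ ∑ⱼ β_i β_j (t - x_j) (x_i - x_j)^2` is `≤ 0` at `-ρ^k` and `≥ 0` at `ρ^k`;
both identities are instances of the bilinear Lagrange identity for
`∑ᵢ ∑ⱼ u_i v_j (y_i - y_j)^2`. So the vertex of `q`, and its roots when real, lie in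
`[-ρ^k, ρ^k]`, which is the claimed bound. -/

lemma abs_add_sqrt_discrim_le {a b c r : ℝ} (ha : 0 ≤ a) (hb : |b| ≤ 2 * a * r)
    (hpos : 0 ≤ a * r ^ 2 + b * r + c) (hneg : 0 ≤ a * r ^ 2 - b * r + c) :
    |b| + Real.sqrt (b ^ 2 - 4 * (a * c)) ≤ 2 * a * r := by
  have habs : 0 ≤ a * r ^ 2 - |b| * r + c := by
    rcases abs_cases b with ⟨h, _⟩ | ⟨h, _⟩ <;> rw [h] <;> linarith
  have hsq : b ^ 2 - 4 * (a * c) ≤ (2 * a * r - |b|) ^ 2 := by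
    nlinarith [mul_nonneg ha habs, sq_abs b]
  calc |b| + Real.sqrt (b ^ 2 - 4 * (a * c))
      ≤ |b| + Real.sqrt ((2 * a * r - |b|) ^ 2) := by gcongr
    _ = 2 * a * r := by rw [Real.sqrt_sq (by linarith)]; ring

section Moments

variable {ι : Type*} [Fintype ι]

def moment (β x : ι → ℝ) (j : ℕ) : ℝ := ∑ i, β i * x i ^ j

lemma sum_sum_mul_mul_sub_sq (u v y : ι → ℝ) :
    ∑ i, ∑ j, u i * v j * (y i - y j) ^ 2 =
      moment u y 0 * moment v y 2 + moment u y 2 * moment v y 0 -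
        2 * (moment u y 1 * moment v y 1) := by
  have expand : ∀ i j, u i * v j * (y i - y j) ^ 2 =
      u i * y i ^ 0 * (v j * y j ^ 2) + u i * y i ^ 2 * (v j * y j ^ 0) -
        2 * (u i * y i ^ 1 * (v j * y j ^ 1)) := fun i j => by ring
  simp only [expand, sum_sub_distrib, sum_add_distrib, ← mul_sum, ← sum_mul, moment]

lemma sum_sum_mul_sub_sq_nonneg {u v y : ι → ℝ} (h : ∀ i j, 0 ≤ u i * v j) :
    0 ≤ ∑ i, ∑ j, u i * v j * (y i - y j) ^ 2 :=
  sum_nonneg fun i _ => sum_nonneg fun j _ => mul_nonneg (h i j) (sq_nonneg _)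

lemma sum_sum_mul_sub_sq_nonpos {u v y : ι → ℝ} (h : ∀ i j, u i * v j ≤ 0) :
    ∑ i, ∑ j, u i * v j * (y i - y j) ^ 2 ≤ 0 :=
  sum_nonpos fun i _ => sum_nonpos fun j _ => mul_nonpos_of_nonpos_of_nonneg (h i j) (sq_nonneg _)

lemma moment_mul_sub (β x : ι → ℝ) (t : ℝ) (j : ℕ) :
    moment (fun i => β i * (t - x i)) x j = t * moment β x j - moment β x (j + 1) := by
  simp only [moment, mul_sum, ← sum_sub_distrib]
  exact sum_congr rfl fun i _ => by ring

lemma two_mul_hankel_quadratic_eq (β x : ι → ℝ) (t : ℝ) :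
    2 * ((moment β x 0 * moment β x 2 - moment β x 1 * moment β x 1) * t ^ 2 +
        (moment β x 1 * moment β x 2 - moment β x 3 * moment β x 0) * t +
        (moment β x 1 * moment β x 3 - moment β x 2 * moment β x 2)) =
      ∑ i, ∑ j, β i * (t - x i) * (β j * (t - x j)) * (x i - x j) ^ 2 := by
  rw [sum_sum_mul_mul_sub_sq, moment_mul_sub, moment_mul_sub, moment_mul_sub]
  ring

lemma hankel_linear_eq (β x : ι → ℝ) (t : ℝ) :
    2 * (moment β x 0 * moment β x 2 - moment β x 1 * moment β x 1) * t +
        (moment β x 1 * moment β x 2 - moment β x 3 * moment β x 0) =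
      ∑ i, ∑ j, β i * (β j * (t - x j)) * (x i - x j) ^ 2 := by
  rw [sum_sum_mul_mul_sub_sq, moment_mul_sub, moment_mul_sub, moment_mul_sub]
  ring

theorem abs_add_sqrt_discrim_le_of_moment {β x : ι → ℝ} (hβ : ∀ i, 0 ≤ β i) {r : ℝ}
    (hx : ∀ i, |x i| ≤ r) :
    |moment β x 1 * moment β x 2 - moment β x 3 * moment β x 0| +
      Real.sqrt ((moment β x 1 * moment β x 2 - moment β x 3 * moment β x 0) ^ 2 -
        4 * ((moment β x 0 * moment β x 2 - moment β x 1 * moment β x 1) *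
          (moment β x 1 * moment β x 3 - moment β x 2 * moment β x 2))) ≤
      2 * (moment β x 0 * moment β x 2 - moment β x 1 * moment β x 1) * r := by
  have hright : ∀ i, 0 ≤ β i * (r - x i) := fun i =>
    mul_nonneg (hβ i) (sub_nonneg.2 (le_of_abs_le (hx i)))
  have hleft : ∀ i, β i * (-r - x i) ≤ 0 := fun i =>
    mul_nonpos_of_nonneg_of_nonpos (hβ i) (by linarith [neg_le_of_abs_le (hx i)])
  have ha := sum_sum_mul_sub_sq_nonneg (y := x) fun i j => mul_nonneg (hβ i) (hβ j)
  rw [sum_sum_mul_mul_sub_sq] at ha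
  have hq_pos := two_mul_hankel_quadratic_eq β x r ▸
    sum_sum_mul_sub_sq_nonneg fun i j => mul_nonneg (hright i) (hright j)
  have hq_neg := two_mul_hankel_quadratic_eq β x (-r) ▸
    sum_sum_mul_sub_sq_nonneg fun i j => mul_nonneg_of_nonpos_of_nonpos (hleft i) (hleft j)
  have hl_pos := hankel_linear_eq β x r ▸
    sum_sum_mul_sub_sq_nonneg fun i j => mul_nonneg (hβ i) (hright j)
  have hl_neg := hankel_linear_eq β x (-r) ▸
    sum_sum_mul_sub_sq_nonpos fun i j => mul_nonpos_of_nonneg_of_nonpos (hβ i) (hleft j)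
  rw [neg_sq] at hq_neg
  exact abs_add_sqrt_discrim_le (by linarith) (abs_le.2 ⟨by linarith, by linarith⟩)
    (by linarith) (by linarith)

end Moments

theorem stmt_4_general (n : ℕ)
    (lam : Fin n → ℝ)
    (rho : ℝ) (hrho : IsGreatest (Set.range fun l => |lam l|) rho)
    (α : Fin n → ℝ) (hα : ∀ l, 0 ≤ α l)
    (m : ℕ → ℝ) (hm : ∀ k, m k = ∑ l, α l * lam l ^ k)
    (s k : ℕ) :
    |(!![m (2*s+k), m (2*s+3*k); m (2*s), m (2*s+2*k)]).det| +
      Real.sqrt ((!![m (2*s+k), m (2*s+3*k); m (2*s), m (2*s+2*k)]).det ^ 2 -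
        4 * ((!![m (2*s), m (2*s+k); m (2*s+k), m (2*s+2*k)]).det *
          (!![m (2*s+k), m (2*s+2*k); m (2*s+2*k), m (2*s+3*k)]).det)) ≤
      2 * (!![m (2*s), m (2*s+k); m (2*s+k), m (2*s+2*k)]).det * rho ^ k := by
  set β : Fin n → ℝ := fun l => α l * lam l ^ (2 * s)
  set x : Fin n → ℝ := fun l => lam l ^ k
  have hβ : ∀ l, 0 ≤ β l := fun l => mul_nonneg (hα l) (by rw [pow_mul]; positivity)
  have hx : ∀ l, |x l| ≤ rho ^ k := fun l => by
    rw [abs_pow]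
    exact pow_le_pow_left₀ (abs_nonneg _) (hrho.2 ⟨l, rfl⟩) k
  have hmoment : ∀ j, m (2 * s + j * k) = moment β x j := fun j => by
    rw [hm]
    exact sum_congr rfl fun l _ => by simp only [β, x, pow_add, ← pow_mul, mul_comm k, mul_assoc]
  have h0 : m (2 * s) = moment β x 0 := by simpa using hmoment 0
  have h1 : m (2 * s + k) = moment β x 1 := by simpa using hmoment 1
  simp only [det_fin_two_of, h0, h1, hmoment 2, hmoment 3]
  exact abs_add_sqrt_discrim_le_of_moment hβ hx

/-- Corollary 3.6 of the paper: a lower bound on the spectral radius in terms of 2×2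
minors of the Hankel matrices of a spectral moment sequence. -/
theorem stmt_4 (n : ℕ) (hn : 1 ≤ n) (G : SimpleGraph (Fin n)) [DecidableRel G.Adj]
    (lam : Fin n → ℝ) (U : Matrix (Fin n) (Fin n) ℝ)
    (hU : Uᵀ * U = 1)
    (hAU : G.adjMatrix ℝ * U = U * Matrix.diagonal lam)
    (rho : ℝ) (hrho : IsGreatest (Set.range fun l => |lam l|) rho)
    (α : Fin n → ℝ) (hα : ∀ l, 0 ≤ α l)
    (m : ℕ → ℝ) (hm : ∀ k, m k = ∑ l, α l * lam l ^ k)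
    (s k : ℕ) (hk : 1 ≤ k)
    (hH : (!![m (2*s), m (2*s+k); m (2*s+k), m (2*s+2*k)]).det ≠ 0) :
    |(!![m (2*s+k), m (2*s+3*k); m (2*s), m (2*s+2*k)]).det| +
      Real.sqrt ((!![m (2*s+k), m (2*s+3*k); m (2*s), m (2*s+2*k)]).det ^ 2 -
        4 * ((!![m (2*s), m (2*s+k); m (2*s+k), m (2*s+2*k)]).det *
          (!![m (2*s+k), m (2*s+2*k); m (2*s+2*k), m (2*s+3*k)]).det)) ≤
      2 * (!![m (2*s), m (2*s+k); m (2*s+k), m (2*s+2*k)]).det * rho ^ k :=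
  stmt_4_general n lam rho hrho α hα m hm s k
end

section
/- Let G be a finite simple undirected graph on n ≥ 1 vertices with e edges and T triangles, and suppose e ≥ 1. Then the spectral radius ρ of the adjacency matrix of G satisfies ρ ≥ 3T/(2e) + sqrt((3T/(2e))^2 + 2e/n). -/
set_option maxHeartbeats 1000000
open Matrix Finset

lemma trace_cube (n : ℕ) (G : SimpleGraph (Fin n)) [DecidableRel G.Adj] :
    Matrix.trace (G.adjMatrix ℝ * G.adjMatrix ℝ * G.adjMatrix ℝ)
      = 6 * ((G.cliqueFinset 3).card : ℝ) := by
  classical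
  set A := G.adjMatrix ℝ with hA
  have htr1 : Matrix.trace (A * A * A) = ∑ i, ∑ j, ∑ k, A i j * A j k * A k i := by
    simp only [Matrix.trace, diag_apply, Matrix.mul_apply, Finset.sum_mul]
    refine Finset.sum_congr rfl fun i _ => ?_
    rw [Finset.sum_comm]
  have htr : Matrix.trace (A * A * A)
      = ∑ p : Fin n × Fin n × Fin n,
          (if G.Adj p.1 p.2.1 ∧ G.Adj p.2.1 p.2.2 ∧ G.Adj p.2.2 p.1 then (1:ℝ) else 0) := by
    rw [htr1, Fintype.sum_prod_type]
    refine Finset.sum_congr rfl fun i _ => ?_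
    rw [Fintype.sum_prod_type]
    refine Finset.sum_congr rfl fun j _ => Finset.sum_congr rfl fun k _ => ?_
    simp only [hA, SimpleGraph.adjMatrix_apply]
    split_ifs <;> simp_all
  rw [htr, Finset.sum_boole]
  set S : Finset (Fin n × Fin n × Fin n) :=
    Finset.univ.filter fun p => G.Adj p.1 p.2.1 ∧ G.Adj p.2.1 p.2.2 ∧ G.Adj p.2.2 p.1 with hS
  have hmap : ∀ p ∈ S, ({p.1, p.2.1, p.2.2} : Finset (Fin n)) ∈ G.cliqueFinset 3 := by
    rintro ⟨a, b, c⟩ hp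
    simp only [hS, Finset.mem_filter] at hp
    obtain ⟨-, h1, h2, h3⟩ := hp
    rw [SimpleGraph.mem_cliqueFinset_iff, SimpleGraph.is3Clique_triple_iff]
    exact ⟨h1, h3.symm, h2⟩
  have hcard : S.card = ∑ t ∈ G.cliqueFinset 3,
      (S.filter fun p => ({p.1, p.2.1, p.2.2} : Finset (Fin n)) = t).card :=
    Finset.card_eq_sum_card_fiberwise hmap
  have hfib : ∀ t ∈ G.cliqueFinset 3,
      (S.filter fun p => ({p.1, p.2.1, p.2.2} : Finset (Fin n)) = t).card = 6 := by
    intro t ht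
    rw [SimpleGraph.mem_cliqueFinset_iff, SimpleGraph.is3Clique_iff] at ht
    obtain ⟨a, b, c, hab, hac, hbc, rfl⟩ := ht
    have hne : a ≠ b := hab.ne
    have hne2 : a ≠ c := hac.ne
    have hne3 : b ≠ c := hbc.ne
    have hkey : (S.filter fun p => ({p.1, p.2.1, p.2.2} : Finset (Fin n)) = {a, b, c})
        = {(a,b,c), (a,c,b), (b,a,c), (b,c,a), (c,a,b), (c,b,a)} := by
      ext ⟨x, y, z⟩
      simp only [hS, Finset.mem_filter, Finset.mem_univ, true_and, Finset.mem_insert,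
        Finset.mem_singleton, Prod.mk.injEq]
      constructor
      · rintro ⟨⟨h1, h2, h3⟩, hset⟩
        have hx : x ∈ ({a, b, c} : Finset (Fin n)) := by rw [← hset]; simp
        have hy : y ∈ ({a, b, c} : Finset (Fin n)) := by rw [← hset]; simp
        have hz : z ∈ ({a, b, c} : Finset (Fin n)) := by rw [← hset]; simp
        have hxy : x ≠ y := h1.ne
        have hyz : y ≠ z := h2.ne
        have hzx : z ≠ x := h3.ne
        simp only [Finset.mem_insert, Finset.mem_singleton] at hx hy hz
        rcases hx with rfl | rfl | rfl <;> rcases hy with rfl | rfl | rfl <;>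
          rcases hz with rfl | rfl | rfl <;>
          first
            | exact absurd rfl hxy | exact absurd rfl hyz | exact absurd rfl hzx
            | exact Or.inl ⟨rfl, rfl, rfl⟩
            | exact Or.inr (Or.inl ⟨rfl, rfl, rfl⟩)
            | exact Or.inr (Or.inr (Or.inl ⟨rfl, rfl, rfl⟩))
            | exact Or.inr (Or.inr (Or.inr (Or.inl ⟨rfl, rfl, rfl⟩)))
            | exact Or.inr (Or.inr (Or.inr (Or.inr (Or.inl ⟨rfl, rfl, rfl⟩))))
            | exact Or.inr (Or.inr (Or.inr (Or.inr (Or.inr ⟨rfl, rfl, rfl⟩))))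
      · have e1 : ({a, c, b} : Finset (Fin n)) = {a, b, c} := by
          ext w; simp only [Finset.mem_insert, Finset.mem_singleton]; tauto
        have e2 : ({b, a, c} : Finset (Fin n)) = {a, b, c} := by
          ext w; simp only [Finset.mem_insert, Finset.mem_singleton]; tauto
        have e3 : ({b, c, a} : Finset (Fin n)) = {a, b, c} := by
          ext w; simp only [Finset.mem_insert, Finset.mem_singleton]; tauto
        have e4 : ({c, a, b} : Finset (Fin n)) = {a, b, c} := by
          ext w; simp only [Finset.mem_insert, Finset.mem_singleton]; tauto
        have e5 : ({c, b, a} : Finset (Fin n)) = {a, b, c} := by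
          ext w; simp only [Finset.mem_insert, Finset.mem_singleton]; tauto
        rintro (⟨rfl, rfl, rfl⟩ | ⟨rfl, rfl, rfl⟩ | ⟨rfl, rfl, rfl⟩ | ⟨rfl, rfl, rfl⟩ |
          ⟨rfl, rfl, rfl⟩ | ⟨rfl, rfl, rfl⟩)
        · exact ⟨⟨hab, hbc, hac.symm⟩, rfl⟩
        · exact ⟨⟨hac, hbc.symm, hab.symm⟩, e1⟩
        · exact ⟨⟨hab.symm, hac, hbc.symm⟩, e2⟩
        · exact ⟨⟨hbc, hac.symm, hab⟩, e3⟩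
        · exact ⟨⟨hac.symm, hab, hbc⟩, e4⟩
        · exact ⟨⟨hbc.symm, hab.symm, hac⟩, e5⟩
    rw [hkey]
    rw [Finset.card_insert_of_notMem, Finset.card_insert_of_notMem,
      Finset.card_insert_of_notMem, Finset.card_insert_of_notMem,
      Finset.card_insert_of_notMem, Finset.card_singleton] <;>
      simp [Prod.ext_iff, hne, hne2, hne3, hne.symm, hne2.symm, hne3.symm]
  rw [hcard, Finset.sum_congr rfl hfib, Finset.sum_const, smul_eq_mul]
  push_cast; ring


/-- Corollary 3.7 of the paper: for a graph with `n` vertices, `e ≥ 1` edges and `T`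
triangles, the spectral radius satisfies `rho ≥ 3T/(2e) + √((3T/(2e))² + 2e/n)`. -/
theorem stmt_5 (n : ℕ) (hn : 1 ≤ n) (G : SimpleGraph (Fin n)) [DecidableRel G.Adj]
    (he : 1 ≤ G.edgeFinset.card)
    (lam : Fin n → ℝ) (U : Matrix (Fin n) (Fin n) ℝ)
    (hU : Uᵀ * U = 1)
    (hAU : G.adjMatrix ℝ * U = U * Matrix.diagonal lam)
    (rho : ℝ) (hrho : IsGreatest (Set.range fun l => |lam l|) rho) :
    3 * ((G.cliqueFinset 3).card : ℝ) / (2 * (G.edgeFinset.card : ℝ)) +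
      Real.sqrt ((3 * ((G.cliqueFinset 3).card : ℝ) / (2 * (G.edgeFinset.card : ℝ))) ^ 2 +
        2 * (G.edgeFinset.card : ℝ) / (n : ℝ)) ≤ rho := by
  classical
  set A := G.adjMatrix ℝ with hA
  set E : ℝ := (G.edgeFinset.card : ℝ) with hEdef
  set T : ℝ := ((G.cliqueFinset 3).card : ℝ) with hTdef
  set N : ℝ := (n : ℝ) with hNdef
  have hE1 : (1:ℝ) ≤ E := by rw [hEdef]; exact_mod_cast he
  have hN1 : (1:ℝ) ≤ N := by rw [hNdef]; exact_mod_cast hn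
  have hE0 : (0:ℝ) < E := by linarith
  have hN0 : (0:ℝ) < N := by linarith
  have hT0 : (0:ℝ) ≤ T := by positivity
  have hUU : U * Uᵀ = 1 := mul_eq_one_comm.mp hU
  have hAdef : A = U * Matrix.diagonal lam * Uᵀ := by
    calc A = A * (U * Uᵀ) := by rw [hUU, mul_one]
    _ = (A * U) * Uᵀ := by rw [mul_assoc]
    _ = U * Matrix.diagonal lam * Uᵀ := by rw [hAU]
  have hconj : ∀ M : Matrix (Fin n) (Fin n) ℝ,
      Matrix.trace (U * M * Uᵀ) = Matrix.trace M := by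
    intro M
    rw [Matrix.trace_mul_cycle, hU, one_mul]
  have hA2 : A * A = U * Matrix.diagonal (fun i => lam i * lam i) * Uᵀ := by
    rw [hAdef]
    calc (U * Matrix.diagonal lam * Uᵀ) * (U * Matrix.diagonal lam * Uᵀ)
        = U * (Matrix.diagonal lam * ((Uᵀ * U) * (Matrix.diagonal lam * Uᵀ))) := by
          simp only [mul_assoc]
    _ = U * (Matrix.diagonal lam * Matrix.diagonal lam) * Uᵀ := by
          rw [hU, one_mul]; simp only [mul_assoc]
    _ = _ := by rw [Matrix.diagonal_mul_diagonal]
  have hA3 : A * A * A = U * Matrix.diagonal (fun i => lam i * lam i * lam i) * Uᵀ := by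
    rw [hA2, hAdef]
    calc (U * Matrix.diagonal (fun i => lam i * lam i) * Uᵀ)
          * (U * Matrix.diagonal lam * Uᵀ)
        = U * (Matrix.diagonal (fun i => lam i * lam i)
            * ((Uᵀ * U) * (Matrix.diagonal lam * Uᵀ))) := by
          simp only [mul_assoc]
    _ = U * (Matrix.diagonal (fun i => lam i * lam i) * Matrix.diagonal lam) * Uᵀ := by
          rw [hU, one_mul]; simp only [mul_assoc]
    _ = _ := by rw [Matrix.diagonal_mul_diagonal]
  have h1 : ∑ i, lam i = 0 := by
    have := hconj (Matrix.diagonal lam)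
    rw [← hAdef] at this
    rw [← Matrix.trace_diagonal lam, ← this, hA, SimpleGraph.trace_adjMatrix]
  have h2 : ∑ i, lam i ^ 2 = 2 * E := by
    have h2' : Matrix.trace (A * A) = 2 * E := by
      have : ∀ i, (A * A) i i = (G.degree i : ℝ) := fun i =>
        G.adjMatrix_mul_self_apply_self i
      unfold Matrix.trace
      simp only [diag_apply, this]
      rw [← Nat.cast_sum, SimpleGraph.sum_degrees_eq_twice_card_edges]
      push_cast [hEdef]; ring
    rw [hA2, hconj, Matrix.trace_diagonal] at h2'
    rw [← h2']
    exact Finset.sum_congr rfl fun i _ => by ring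
  have h3 : ∑ i, lam i ^ 3 = 6 * T := by
    have h3' := trace_cube n G
    rw [← hA, hA3, hconj, Matrix.trace_diagonal] at h3'
    rw [← h3']
    exact Finset.sum_congr rfl fun i _ => by ring
  -- properties of rho
  obtain ⟨i₀, hi₀⟩ := hrho.1
  have hr0 : 0 ≤ rho := hi₀ ▸ abs_nonneg _
  have hub : ∀ i, |lam i| ≤ rho := fun i => hrho.2 ⟨i, rfl⟩
  have hlam_le : ∀ i, lam i ≤ rho := fun i => (le_abs_self _).trans (hub i)
  have hlam_ge : ∀ i, -rho ≤ lam i := fun i => neg_le_of_abs_le (hub i)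
  -- rho * 2E ≥ 6T
  have h6T : 6 * T ≤ 2 * E * rho := by
    have : ∀ i, lam i ^ 3 ≤ rho * lam i ^ 2 := by
      intro i
      have h := mul_le_mul_of_nonneg_right (hlam_le i) (sq_nonneg (lam i))
      calc lam i ^ 3 = lam i * lam i ^ 2 := by ring
      _ ≤ rho * lam i ^ 2 := h
    calc 6 * T = ∑ i, lam i ^ 3 := h3.symm
    _ ≤ ∑ i, rho * lam i ^ 2 := Finset.sum_le_sum fun i _ => this i
    _ = rho * (2 * E) := by rw [← Finset.mul_sum, h2]
    _ = 2 * E * rho := by ring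
  -- Cauchy-Schwarz
  have hCS : (2 * E) ^ 2 ≤ (2 * E * rho - 6 * T) * (N * rho) := by
    have key := Finset.sum_mul_sq_le_sq_mul_sq Finset.univ
      (fun i => lam i * Real.sqrt (rho - lam i)) (fun i => Real.sqrt (rho - lam i))
    have hnn : ∀ i, 0 ≤ rho - lam i := fun i => sub_nonneg.mpr (hlam_le i)
    have e1 : ∑ i, (lam i * Real.sqrt (rho - lam i)) * Real.sqrt (rho - lam i)
        = -(2 * E) := by
      have : ∀ i, (lam i * Real.sqrt (rho - lam i)) * Real.sqrt (rho - lam i)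
          = lam i * rho - lam i ^ 2 := by
        intro i
        rw [mul_assoc, Real.mul_self_sqrt (hnn i)]
        ring
      rw [Finset.sum_congr rfl fun i _ => this i, Finset.sum_sub_distrib,
        ← Finset.sum_mul, h1, h2]
      ring
    have e2 : ∑ i, (lam i * Real.sqrt (rho - lam i)) ^ 2 = 2 * E * rho - 6 * T := by
      have : ∀ i, (lam i * Real.sqrt (rho - lam i)) ^ 2
          = lam i ^ 2 * rho - lam i ^ 3 := by
        intro i
        rw [mul_pow, Real.sq_sqrt (hnn i)]
        ring
      rw [Finset.sum_congr rfl fun i _ => this i, Finset.sum_sub_distrib,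
        ← Finset.sum_mul, h2, h3]
    have e3 : ∑ i, (Real.sqrt (rho - lam i)) ^ 2 = N * rho := by
      have : ∀ i, (Real.sqrt (rho - lam i)) ^ 2 = rho - lam i := fun i =>
        Real.sq_sqrt (hnn i)
      rw [Finset.sum_congr rfl fun i _ => this i, Finset.sum_sub_distrib, h1,
        Finset.sum_const, Finset.card_univ, Fintype.card_fin, nsmul_eq_mul]
      simp [hNdef]
    rw [e1, e2, e3] at key
    calc (2 * E) ^ 2 = (-(2 * E)) ^ 2 := by ring
    _ ≤ (2 * E * rho - 6 * T) * (N * rho) := key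
  -- final arithmetic
  set t : ℝ := 3 * T / (2 * E) with htdef
  set s : ℝ := 2 * E / N with hsdef
  have ht_le : t ≤ rho := by
    rw [htdef, div_le_iff₀ (by linarith : (0:ℝ) < 2 * E)]
    nlinarith [h6T, hT0, hr0, hE0]
  have hkey : 2 * E ^ 2 ≤ N * E * rho ^ 2 - 3 * T * N * rho := by nlinarith [hCS]
  have h9 : 0 ≤ rho ^ 2 - 2 * t * rho - s := by
    have heq : rho ^ 2 - 2 * t * rho - s
        = (N * E * rho ^ 2 - 3 * T * N * rho - 2 * E ^ 2) / (N * E) := by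
      rw [htdef, hsdef]
      field_simp
    rw [heq]
    apply div_nonneg (by linarith) (by positivity)
  have hsq : t ^ 2 + s ≤ (rho - t) ^ 2 := by nlinarith [h9]
  have hsqrt : Real.sqrt (t ^ 2 + s) ≤ rho - t := by
    calc Real.sqrt (t ^ 2 + s) ≤ Real.sqrt ((rho - t) ^ 2) := Real.sqrt_le_sqrt hsq
    _ = rho - t := Real.sqrt_sq (by linarith)
  linarith
end

section
/- Let G be a finite simple undirected graph, let i be a vertex of G of degree d_i ≥ 1, and let T_i be the number of triangles of G containing vertex i. Then the spectral radius ρ of the adjacency matrix of G satisfies d_i · ρ ≥ T_i + sqrt(T_i^2 + d_i^3). -/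
open Matrix Finset

lemma count_aux {n : ℕ} (G : SimpleGraph (Fin n)) [DecidableRel G.Adj] (i : Fin n) :
    (Finset.univ.filter (fun p : Fin n × Fin n =>
      G.Adj i p.2 ∧ G.Adj p.2 p.1 ∧ G.Adj p.1 i)).card
      = 2 * ((G.cliqueFinset 3).filter (fun t => i ∈ t)).card := by
  classical
  set P := Finset.univ.filter (fun p : Fin n × Fin n =>
      G.Adj i p.2 ∧ G.Adj p.2 p.1 ∧ G.Adj p.1 i) with hP
  have hmap : ∀ p ∈ P, ({i, p.1, p.2} : Finset (Fin n)) ∈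
      (G.cliqueFinset 3).filter (fun t => i ∈ t) := by
    intro p hp
    simp only [hP, Finset.mem_filter, Finset.mem_univ, true_and] at hp
    obtain ⟨h1, h2, h3⟩ := hp
    simp only [Finset.mem_filter, SimpleGraph.mem_cliqueFinset_iff]
    exact ⟨SimpleGraph.is3Clique_triple_iff.2 ⟨h3.symm, h1, h2.symm⟩, by simp⟩
  rw [Finset.card_eq_sum_card_fiberwise hmap]
  have fiber : ∀ t ∈ (G.cliqueFinset 3).filter (fun t => i ∈ t),
      (P.filter (fun p => ({i, p.1, p.2} : Finset (Fin n)) = t)).card = 2 := by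
    intro t ht
    simp only [Finset.mem_filter, SimpleGraph.mem_cliqueFinset_iff] at ht
    obtain ⟨hcl, hit⟩ := ht
    have hcard : (t.erase i).card = 2 := by
      rw [Finset.card_erase_of_mem hit, hcl.card_eq]
    obtain ⟨a, b, hab, hs⟩ := Finset.card_eq_two.mp hcard
    have hae : a ∈ t.erase i := by rw [hs]; simp
    have hbe : b ∈ t.erase i := by rw [hs]; simp
    have hat : a ∈ t := Finset.mem_of_mem_erase hae
    have hbt : b ∈ t := Finset.mem_of_mem_erase hbe
    have hai : a ≠ i := Finset.ne_of_mem_erase hae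
    have hbi : b ≠ i := Finset.ne_of_mem_erase hbe
    have hia : G.Adj i a := hcl.isClique (Finset.mem_coe.2 hit) (Finset.mem_coe.2 hat) hai.symm
    have hib : G.Adj i b := hcl.isClique (Finset.mem_coe.2 hit) (Finset.mem_coe.2 hbt) hbi.symm
    have hadj : G.Adj a b := hcl.isClique (Finset.mem_coe.2 hat) (Finset.mem_coe.2 hbt) hab
    have ht_eq : t = {i, a, b} := by
      rw [← Finset.insert_erase hit, hs]
    have hfib : P.filter (fun p => ({i, p.1, p.2} : Finset (Fin n)) = t)
        = {(a, b), (b, a)} := by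
      ext p
      simp only [Finset.mem_filter, Finset.mem_insert, Finset.mem_singleton, hP,
        Finset.mem_univ, true_and]
      constructor
      · rintro ⟨⟨h1, h2, h3⟩, he⟩
        have hp1i : p.1 ≠ i := fun h => G.irrefl (h ▸ h3)
        have hp2i : p.2 ≠ i := fun h => G.irrefl (h ▸ h1)
        have hp12 : p.2 ≠ p.1 := G.ne_of_adj h2
        have hp1t : p.1 ∈ ({i, a, b} : Finset (Fin n)) := by
          rw [← ht_eq, ← he]; simp
        have hp2t : p.2 ∈ ({i, a, b} : Finset (Fin n)) := by
          rw [← ht_eq, ← he]; simp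
        simp only [Finset.mem_insert, Finset.mem_singleton] at hp1t hp2t
        rcases hp1t with h | h | h <;> rcases hp2t with h' | h' | h' <;>
          simp_all [Prod.ext_iff] <;> tauto
      · have hcomm : ({i, b, a} : Finset (Fin n)) = {i, a, b} := by
          rw [Finset.pair_comm b a]
        rintro (h | h) <;> rw [h]
        · exact ⟨⟨hib, hadj.symm, hia.symm⟩, by rw [ht_eq]⟩
        · exact ⟨⟨hia, hadj, hib.symm⟩, by rw [ht_eq]; exact hcomm⟩
    rw [hfib]
    rw [Finset.card_insert_of_notMem (by simp [Prod.ext_iff]; intro h; exact absurd h hab),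
      Finset.card_singleton]
  rw [Finset.sum_congr rfl fiber, Finset.sum_const, smul_eq_mul, mul_comm]




/-- Corollary 3.8 of the paper: for a vertex `i` of degree `d_i ≥ 1` touching `T_i`
triangles, the spectral radius satisfies `d_i * rho ≥ T_i + √(T_i² + d_i³)`. -/
theorem stmt_6 (n : ℕ) (hn : 1 ≤ n) (G : SimpleGraph (Fin n)) [DecidableRel G.Adj]
    (lam : Fin n → ℝ) (U : Matrix (Fin n) (Fin n) ℝ)
    (hU : Uᵀ * U = 1)
    (hAU : G.adjMatrix ℝ * U = U * Matrix.diagonal lam)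
    (rho : ℝ) (hrho : IsGreatest (Set.range fun l => |lam l|) rho)
    (i : Fin n) (hd : 1 ≤ G.degree i) :
    ((((G.cliqueFinset 3).filter (fun t => i ∈ t)).card : ℝ) +
      Real.sqrt (((((G.cliqueFinset 3).filter (fun t => i ∈ t)).card : ℝ)) ^ 2 +
        ((G.degree i : ℝ)) ^ 3)) ≤ (G.degree i : ℝ) * rho := by
  classical
  set A := G.adjMatrix ℝ with hA
  set d : ℝ := (G.degree i : ℝ) with hdd
  set T : ℝ := ((((G.cliqueFinset 3).filter (fun t => i ∈ t)).card : ℝ)) with hTT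
  have hUU : U * Uᵀ = 1 := mul_eq_one_comm.mp hU
  have hAeq : A = U * Matrix.diagonal lam * Uᵀ := by
    calc A = A * (U * Uᵀ) := by rw [hUU, Matrix.mul_one]
    _ = (A * U) * Uᵀ := by rw [Matrix.mul_assoc]
    _ = U * Matrix.diagonal lam * Uᵀ := by rw [hAU]
  have hpow : ∀ k : ℕ, A ^ k = U * Matrix.diagonal (fun l => lam l ^ k) * Uᵀ := by
    intro k
    induction k with
    | zero =>
      simp only [pow_zero, Matrix.diagonal_one, Matrix.mul_one, hUU]
    | succ k ih =>
      rw [pow_succ, ih, hAeq]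
      simp only [Matrix.mul_assoc]
      rw [← Matrix.mul_assoc Uᵀ U (Matrix.diagonal lam * Uᵀ), hU, Matrix.one_mul,
        ← Matrix.mul_assoc (Matrix.diagonal fun l => lam l ^ k) (Matrix.diagonal lam) Uᵀ,
        Matrix.diagonal_mul_diagonal]
      have hfun : (fun l => lam l ^ k * lam l) = fun l => lam l ^ (k + 1) :=
        funext fun l => (pow_succ _ _).symm
      rw [hfun]
  have entry : ∀ k : ℕ, (A ^ k) i i = ∑ l, U i l ^ 2 * lam l ^ k := by
    intro k
    rw [hpow k, Matrix.mul_apply]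
    refine Finset.sum_congr rfl fun l _ => ?_
    rw [Matrix.mul_diagonal, Matrix.transpose_apply]
    ring
  have hS0 : ∑ l, U i l ^ 2 = 1 := by
    have h := entry 0
    simp only [pow_zero, Matrix.one_apply_eq, mul_one] at h
    exact h.symm
  have hS1 : ∑ l, U i l ^ 2 * lam l = 0 := by
    have h := entry 1
    simp only [pow_one] at h
    rw [← h, hA, SimpleGraph.adjMatrix_apply, if_neg (G.irrefl)]
  have hS2 : ∑ l, U i l ^ 2 * lam l ^ 2 = d := by
    have h := entry 2
    rw [← h, sq, hA, SimpleGraph.adjMatrix_mul_self_apply_self]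
  have hS3 : ∑ l, U i l ^ 2 * lam l ^ 3 = 2 * T := by
    have h := entry 3
    rw [← h]
    have h3 : (A ^ 3) i i = ∑ j, ∑ k, A i k * A k j * A j i := by
      rw [show A ^ 3 = A * A * A by rw [pow_succ, pow_two]]
      rw [Matrix.mul_apply]
      refine Finset.sum_congr rfl fun j _ => ?_
      rw [Matrix.mul_apply, Finset.sum_mul]
    have hterm : ∀ j k : Fin n, A i k * A k j * A j i =
        if G.Adj i k ∧ G.Adj k j ∧ G.Adj j i then (1 : ℝ) else 0 := by
      intro j k
      by_cases h1 : G.Adj i k <;> by_cases h2 : G.Adj k j <;> by_cases h3 : G.Adj j i <;>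
        simp [hA, SimpleGraph.adjMatrix_apply, h1, h2, h3]
    rw [h3]
    calc ∑ j, ∑ k, A i k * A k j * A j i
        = ∑ p : Fin n × Fin n,
            (if G.Adj i p.2 ∧ G.Adj p.2 p.1 ∧ G.Adj p.1 i then (1 : ℝ) else 0) := by
          rw [Fintype.sum_prod_type]
          exact Finset.sum_congr rfl fun j _ => Finset.sum_congr rfl fun k _ => hterm j k
      _ = ((Finset.univ.filter (fun p : Fin n × Fin n =>
            G.Adj i p.2 ∧ G.Adj p.2 p.1 ∧ G.Adj p.1 i)).card : ℝ) := by
          rw [Finset.sum_boole]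
      _ = 2 * T := by
          rw [count_aux G i, hTT]
          push_cast
          ring
  -- spectral side
  have hle : ∀ l, lam l ≤ rho := fun l =>
    le_trans (le_abs_self _) (hrho.2 (Set.mem_range_self l))
  have hrho0 : 0 ≤ rho := by
    obtain ⟨l0, hl0⟩ := hrho.1
    rw [← hl0]; positivity
  have key : d ^ 2 ≤ rho * (rho * d - 2 * T) := by
    have cs := Finset.sum_sq_le_sum_mul_sum_of_sq_eq_mul (Finset.univ : Finset (Fin n))
      (r := fun l => U i l ^ 2 * (rho - lam l) * lam l)
      (f := fun l => U i l ^ 2 * (rho - lam l))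
      (g := fun l => U i l ^ 2 * (rho - lam l) * lam l ^ 2)
      (fun l _ => mul_nonneg (sq_nonneg _) (sub_nonneg.mpr (hle l)))
      (fun l _ => mul_nonneg (mul_nonneg (sq_nonneg _) (sub_nonneg.mpr (hle l))) (sq_nonneg _))
      (fun l _ => by ring)
    have e1 : ∑ l, U i l ^ 2 * (rho - lam l) = rho := by
      have : ∑ l, U i l ^ 2 * (rho - lam l)
          = rho * (∑ l, U i l ^ 2) - ∑ l, U i l ^ 2 * lam l := by
        rw [Finset.mul_sum, ← Finset.sum_sub_distrib]
        exact Finset.sum_congr rfl fun l _ => by ring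
      rw [this, hS0, hS1]; ring
    have e2 : ∑ l, U i l ^ 2 * (rho - lam l) * lam l ^ 2 = rho * d - 2 * T := by
      have : ∑ l, U i l ^ 2 * (rho - lam l) * lam l ^ 2
          = rho * (∑ l, U i l ^ 2 * lam l ^ 2) - ∑ l, U i l ^ 2 * lam l ^ 3 := by
        rw [Finset.mul_sum, ← Finset.sum_sub_distrib]
        exact Finset.sum_congr rfl fun l _ => by ring
      rw [this, hS2, hS3]
    have e3 : ∑ l, U i l ^ 2 * (rho - lam l) * lam l = -d := by
      have : ∑ l, U i l ^ 2 * (rho - lam l) * lam l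
          = rho * (∑ l, U i l ^ 2 * lam l) - ∑ l, U i l ^ 2 * lam l ^ 2 := by
        rw [Finset.mul_sum, ← Finset.sum_sub_distrib]
        exact Finset.sum_congr rfl fun l _ => by ring
      rw [this, hS1, hS2]; ring
    rw [e1, e2, e3] at cs
    nlinarith [cs]
  have hd1 : (1 : ℝ) ≤ d := by rw [hdd]; exact_mod_cast hd
  have hT0 : (0 : ℝ) ≤ T := by rw [hTT]; positivity
  have hrpos : 0 < rho := by
    rcases hrho0.lt_or_eq with h | h
    · exact h
    · exfalso; rw [← h] at key; nlinarith
  have hmid : 0 < rho * d - 2 * T := by nlinarith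
  have hs2 := Real.sq_sqrt (show (0:ℝ) ≤ T ^ 2 + d ^ 3 by positivity)
  have hsnn := Real.sqrt_nonneg (T ^ 2 + d ^ 3)
  nlinarith [hs2, hsnn, key, hd1, hT0, hrpos, hmid,
    mul_nonneg hsnn (sub_nonneg.mpr (show T + Real.sqrt (T^2+d^3) ≤ T + Real.sqrt (T^2+d^3) from le_refl _))]
end

section
/- Let G be a finite simple undirected graph with eigenvalues λ_1 ≥ λ_2 ≥ ⋯ ≥ λ_n and spectral radius ρ = λ_1, and let m_k = Σ_{l=1}^n α_l λ_l^k be a spectral moment sequence of G with nonnegative weights α_l, where α_1 is the weight attached to λ_1. Assume α_1 > 0 and m_0 > 0. Then for every k ≥ 1, m_0 · ρ^k ≤ m_k + sqrt((m_0/α_1 − 1)·(m_0·m_{2k} − m_k^2)), where sqrt denotes the real square root. -/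
/-!
Since the adjacency matrix has nonnegative entries, `|vᵀ A v| ≤ |v|ᵀ A |v|`; applied to a unit
eigenvector for `λ_l` and combined with the Rayleigh bound `wᵀ A w ≤ λ₁ ‖w‖²`, this gives
`|λ_l| ≤ λ₁`, so `ρ = λ₁`.

For the moment inequality put `x = ρ^k`, `P = m₀ - α₁` and let `S`, `T` be the sums of `α_l λ_l^k`
and `α_l λ_l^{2k}` over `l ≠ 1`. Then `m₀ x - m_k = P x - S`, and a direct computation gives
`(m₀/α₁ - 1)(m₀ m_{2k} - m_k²) - (P x - S)² = (m₀/α₁)(P T - S²)`, which is nonnegative by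
Cauchy–Schwarz.
-/

open Matrix Finset

section Spectrum

variable {ι : Type*} [Fintype ι] {A U : Matrix ι ι ℝ} {lam : ι → ℝ}

theorem abs_dotProduct_mulVec_le (hA : ∀ i j, 0 ≤ A i j) (v : ι → ℝ) :
    |v ⬝ᵥ (A *ᵥ v)| ≤ |v| ⬝ᵥ (A *ᵥ |v|) := by
  simp only [dotProduct, mulVec, Pi.abs_apply]
  refine (abs_sum_le_sum_abs _ _).trans (sum_le_sum fun i _ => ?_)
  rw [abs_mul]
  refine mul_le_mul_of_nonneg_left ((abs_sum_le_sum_abs _ _).trans_eq ?_) (abs_nonneg _)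
  simp only [abs_mul, abs_of_nonneg (hA i _)]

variable [DecidableEq ι]

theorem dotProduct_mulVec_le_of_mul_eq_mul_diagonal (hU : Uᵀ * U = 1)
    (hAU : A * U = U * diagonal lam) {c : ℝ} (hc : ∀ l, lam l ≤ c) (w : ι → ℝ) :
    w ⬝ᵥ (A *ᵥ w) ≤ c * (w ⬝ᵥ w) := by
  have hUUt : U * Uᵀ = 1 := mul_eq_one_comm.mp hU
  have hA : A = U * diagonal lam * Uᵀ := by
    rw [← hAU, Matrix.mul_assoc, hUUt, Matrix.mul_one]
  set z := Uᵀ *ᵥ w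
  have hwAw : w ⬝ᵥ (A *ᵥ w) = ∑ l, lam l * z l ^ 2 := by
    rw [hA, Matrix.mul_assoc, ← mulVec_mulVec, dotProduct_mulVec, ← mulVec_transpose,
      ← mulVec_mulVec]
    simp only [dotProduct, mulVec_diagonal]
    exact sum_congr rfl fun l _ => by ring
  have hww : w ⬝ᵥ w = ∑ l, z l ^ 2 := by
    have : z ⬝ᵥ z = w ⬝ᵥ w := by
      rw [dotProduct_mulVec, vecMul_transpose, mulVec_mulVec, hUUt, one_mulVec]
    rw [← this]
    exact sum_congr rfl fun l _ => (sq _).symm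
  rw [hwAw, hww, mul_sum]
  exact sum_le_sum fun l _ => mul_le_mul_of_nonneg_right (hc l) (sq_nonneg _)

theorem abs_le_of_mul_eq_mul_diagonal (hA : ∀ i j, 0 ≤ A i j) (hU : Uᵀ * U = 1)
    (hAU : A * U = U * diagonal lam) {c : ℝ} (hc : ∀ l, lam l ≤ c) (l : ι) :
    |lam l| ≤ c := by
  set v := Uᵀ l
  have hvv : v ⬝ᵥ v = 1 := by
    have := congrFun (congrFun hU l) l
    rwa [mul_apply', one_apply_eq] at this
  have hAv : A *ᵥ v = lam l • v := by
    ext i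
    have := congrFun (congrFun hAU i) l
    rw [mul_apply', mul_diagonal] at this
    rw [Pi.smul_apply, smul_eq_mul, mul_comm]
    exact this
  have habs : |v| ⬝ᵥ |v| = 1 := by
    simpa [dotProduct, Pi.abs_apply, abs_mul_abs_self] using hvv
  calc |lam l| = |v ⬝ᵥ (A *ᵥ v)| := by rw [hAv, dotProduct_smul, hvv, smul_eq_mul, mul_one]
    _ ≤ |v| ⬝ᵥ (A *ᵥ |v|) := abs_dotProduct_mulVec_le hA v
    _ ≤ c * (|v| ⬝ᵥ |v|) := dotProduct_mulVec_le_of_mul_eq_mul_diagonal hU hAU hc _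
    _ = c := by rw [habs, mul_one]

theorem isGreatest_range_abs_of_mul_eq_mul_diagonal (hA : ∀ i j, 0 ≤ A i j)
    (hU : Uᵀ * U = 1) (hAU : A * U = U * diagonal lam) {i₀ : ι} (hi₀ : ∀ l, lam l ≤ lam i₀) :
    IsGreatest (Set.range fun l => |lam l|) (lam i₀) := by
  have hle := abs_le_of_mul_eq_mul_diagonal hA hU hAU hi₀
  refine ⟨⟨i₀, abs_of_nonneg ((abs_nonneg _).trans (hle i₀))⟩, ?_⟩
  rintro _ ⟨l, rfl⟩
  exact hle l

end Spectrum

theorem sq_sub_le_of_sq_le_mul {α₀ P S T : ℝ} (hα₀ : 0 < α₀) (hP : 0 ≤ P) (hST : S ^ 2 ≤ P * T)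
    (x : ℝ) :
    ((α₀ + P) * x - (α₀ * x + S)) ^ 2 ≤
      ((α₀ + P) / α₀ - 1) * ((α₀ + P) * (α₀ * x ^ 2 + T) - (α₀ * x + S) ^ 2) := by
  have hgap : ((α₀ + P) / α₀ - 1) * ((α₀ + P) * (α₀ * x ^ 2 + T) - (α₀ * x + S) ^ 2) -
      ((α₀ + P) * x - (α₀ * x + S)) ^ 2 = (α₀ + P) / α₀ * (P * T - S ^ 2) := by
    field_simp
    ring
  have : 0 ≤ (α₀ + P) / α₀ * (P * T - S ^ 2) := by
    apply mul_nonneg (div_nonneg (by linarith) hα₀.le)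
    linarith
  linarith

theorem sum_mul_le_sum_mul_add_sqrt {ι : Type*} [Fintype ι] [DecidableEq ι] {α : ι → ℝ}
    (hα : ∀ l, 0 ≤ α l) {i₀ : ι} (hi₀ : 0 < α i₀) (y : ι → ℝ) :
    (∑ l, α l) * y i₀ ≤ ∑ l, α l * y l +
      √(((∑ l, α l) / α i₀ - 1) *
        ((∑ l, α l) * ∑ l, α l * y l ^ 2 - (∑ l, α l * y l) ^ 2)) := by
  set s := univ.erase i₀
  have hsplit (f : ι → ℝ) : ∑ l, f l = f i₀ + ∑ l ∈ s, f l :=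
    (add_sum_erase _ _ (mem_univ i₀)).symm
  have hCS : (∑ l ∈ s, α l * y l) ^ 2 ≤ (∑ l ∈ s, α l) * ∑ l ∈ s, α l * y l ^ 2 :=
    sum_sq_le_sum_mul_sum_of_sq_le_mul s (fun l _ => hα l)
      (fun l _ => mul_nonneg (hα l) (sq_nonneg _)) (fun l _ => le_of_eq (by ring))
  have hsq := sq_sub_le_of_sq_le_mul hi₀ (sum_nonneg fun l _ => hα l) hCS (y i₀)
  rw [← hsplit, ← hsplit fun l => α l * y l ^ 2, ← hsplit fun l => α l * y l] at hsq
  linarith [le_abs_self ((∑ l, α l) * y i₀ - ∑ l, α l * y l), Real.abs_le_sqrt hsq]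

theorem stmt_10_general (n : ℕ) (hn : 1 ≤ n) (G : SimpleGraph (Fin n)) [DecidableRel G.Adj]
    (lam : Fin n → ℝ) (hlam : Antitone lam)
    (U : Matrix (Fin n) (Fin n) ℝ)
    (hU : Uᵀ * U = 1)
    (hAU : G.adjMatrix ℝ * U = U * Matrix.diagonal lam)
    (rho : ℝ) (hrho : IsGreatest (Set.range fun l => |lam l|) rho)
    (α : Fin n → ℝ) (hα : ∀ l, 0 ≤ α l)
    (m : ℕ → ℝ) (hm : ∀ k, m k = ∑ l, α l * lam l ^ k)
    (hα0 : 0 < α ⟨0, hn⟩) :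
    ∀ k : ℕ, 1 ≤ k →
      m 0 * rho ^ k ≤ m k +
        Real.sqrt ((m 0 / α ⟨0, hn⟩ - 1) * (m 0 * m (2 * k) - m k ^ 2)) := by
  intro k _
  have hadj : ∀ i j, 0 ≤ G.adjMatrix ℝ i j := fun i j => by
    rw [SimpleGraph.adjMatrix_apply]; split_ifs <;> norm_num
  have hrho_eq : rho = lam ⟨0, hn⟩ := hrho.unique <|
    isGreatest_range_abs_of_mul_eq_mul_diagonal hadj hU hAU fun l => hlam (Nat.zero_le l.val)
  have hm0 : m 0 = ∑ l, α l := by simp [hm]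
  have hm2k : m (2 * k) = ∑ l, α l * (lam l ^ k) ^ 2 := by
    simp only [hm, ← pow_mul, mul_comm k 2]
  rw [hrho_eq, hm0, hm2k, hm k]
  exact sum_mul_le_sum_mul_add_sqrt hα hα0 fun l => lam l ^ k

/-- Corollary 4.3 of the paper: upper bound on `ρ^k` from a 2×2 minor of the Hankel
matrix of a spectral moment sequence with weight `α₁ > 0` at `λ₁ = ρ`. -/
theorem stmt_10 (n : ℕ) (hn : 1 ≤ n) (G : SimpleGraph (Fin n)) [DecidableRel G.Adj]
    (lam : Fin n → ℝ) (hlam : Antitone lam)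
    (U : Matrix (Fin n) (Fin n) ℝ)
    (hU : Uᵀ * U = 1)
    (hAU : G.adjMatrix ℝ * U = U * Matrix.diagonal lam)
    (rho : ℝ) (hrho : IsGreatest (Set.range fun l => |lam l|) rho)
    (α : Fin n → ℝ) (hα : ∀ l, 0 ≤ α l)
    (m : ℕ → ℝ) (hm : ∀ k, m k = ∑ l, α l * lam l ^ k)
    (hα0 : 0 < α ⟨0, hn⟩) (hm0 : 0 < m 0) :
    ∀ k : ℕ, 1 ≤ k →
      m 0 * rho ^ k ≤ m k +
        Real.sqrt ((m 0 / α ⟨0, hn⟩ - 1) * (m 0 * m (2 * k) - m k ^ 2)) :=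
  stmt_10_general n hn G lam hlam U hU hAU rho hrho α hα m hm hα0
end

section
/- Let G be a finite simple undirected graph with eigenvalues λ_1 ≥ λ_2 ≥ ⋯ ≥ λ_n and spectral radius ρ = λ_1, and let m_k = Σ_{l=1}^n α_l λ_l^k be a spectral moment sequence of G with nonnegative weights α_l, where α_1 is the weight attached to λ_1. Assume α_1 > 0, m_0 > 0, and m_{2k} > 0. Then m_{2k} + sqrt((m_0/α_1 − 1)·(m_0·m_{4k} − m_{2k}^2)) ≤ m_0·m_{2k}/α_1; in other words, the two-moment upper bound on ρ^{2k} from the 2×2 Hankel minor is at most the one-moment bound m_{2k}/α_1. -/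
open Matrix Finset

/-- The tightness claim in Corollary 4.3 of the paper: the 2×2-minor upper bound on
`ρ^{2k}` is at most the one-moment bound `m_{2k}/α₁`. -/
theorem stmt_11 (n : ℕ) (hn : 1 ≤ n) (G : SimpleGraph (Fin n)) [DecidableRel G.Adj]
    (lam : Fin n → ℝ) (hlam : Antitone lam)
    (U : Matrix (Fin n) (Fin n) ℝ)
    (hU : Uᵀ * U = 1)
    (hAU : G.adjMatrix ℝ * U = U * Matrix.diagonal lam)
    (rho : ℝ) (hrho : IsGreatest (Set.range fun l => |lam l|) rho)
    (α : Fin n → ℝ) (hα : ∀ l, 0 ≤ α l)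
    (m : ℕ → ℝ) (hm : ∀ k, m k = ∑ l, α l * lam l ^ k)
    (hα0 : 0 < α ⟨0, hn⟩) (hm0 : 0 < m 0)
    (k : ℕ) (hm2k : 0 < m (2 * k)) :
    m (2 * k) +
      Real.sqrt ((m 0 / α ⟨0, hn⟩ - 1) * (m 0 * m (4 * k) - m (2 * k) ^ 2)) ≤
      m 0 * m (2 * k) / α ⟨0, hn⟩ := by
  set i0 : Fin n := ⟨0, hn⟩ with hi0def
  have hUU : U * Uᵀ = 1 := mul_eq_one_comm.mp hU
  have hAeq : G.adjMatrix ℝ = U * Matrix.diagonal lam * Uᵀ := by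
    rw [← hAU, Matrix.mul_assoc, hUU, Matrix.mul_one]
  -- dot product identities
  have hdot : ∀ x : Fin n → ℝ,
      x ⬝ᵥ (G.adjMatrix ℝ *ᵥ x) = ∑ l, lam l * ((Uᵀ *ᵥ x) l)^2 := by
    intro x
    rw [hAeq, ← Matrix.mulVec_mulVec, ← Matrix.mulVec_mulVec,
      Matrix.dotProduct_mulVec, ← Matrix.mulVec_transpose]
    simp [dotProduct, Matrix.mulVec_diagonal]
    exact Finset.sum_congr rfl fun l _ => by ring
  have hdot1 : ∀ x : Fin n → ℝ, x ⬝ᵥ x = ∑ l, ((Uᵀ *ᵥ x) l)^2 := by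
    intro x
    have h : (Uᵀ *ᵥ x) ⬝ᵥ (Uᵀ *ᵥ x) = x ⬝ᵥ x := by
      nth_rewrite 1 [Matrix.mulVec_transpose]
      rw [← Matrix.dotProduct_mulVec, Matrix.mulVec_mulVec, hUU, Matrix.one_mulVec]
    rw [← h]
    simp [dotProduct, sq]
  have rayleigh : ∀ x : Fin n → ℝ, x ⬝ᵥ (G.adjMatrix ℝ *ᵥ x) ≤ lam i0 * (x ⬝ᵥ x) := by
    intro x
    rw [hdot, hdot1, Finset.mul_sum]
    apply Finset.sum_le_sum
    intro l _
    have : lam l ≤ lam i0 := hlam (by simp [hi0def, Fin.le_def])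
    nlinarith [sq_nonneg ((Uᵀ *ᵥ x) l)]
  -- Perron-Frobenius: |lam l| ≤ lam i0
  have perron : ∀ l, |lam l| ≤ lam i0 := by
    intro l
    refine le_trans (hrho.2 ⟨l, rfl⟩) ?_
    obtain ⟨l0, hl0⟩ := hrho.1
    rw [← hl0]
    show |lam l0| ≤ lam i0
    rcases abs_cases (lam l0) with ⟨h, _⟩ | ⟨h, _⟩
    · rw [h]; exact hlam (by simp [hi0def, Fin.le_def])
    · -- negative case: use the eigenvector trick
      set u : Fin n → ℝ := fun i => U i l0 with hu
      have huu : u ⬝ᵥ u = 1 := by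
        have := congrFun (congrFun hU l0) l0
        simpa [Matrix.mul_apply, Matrix.one_apply, dotProduct, hu,
          Matrix.transpose_apply, mul_comm] using this
      have hAu : G.adjMatrix ℝ *ᵥ u = fun i => lam l0 * u i := by
        funext i
        have h := congrFun (congrFun hAU i) l0
        rw [Matrix.mul_diagonal] at h
        simpa [Matrix.mul_apply, Matrix.mulVec, dotProduct, hu, mul_comm] using h
      set w : Fin n → ℝ := fun i => |u i| with hw
      have hww : w ⬝ᵥ w = 1 := by
        rw [← huu]; simp [dotProduct, hw, abs_mul_abs_self]
      have hneg : -lam l0 ≤ w ⬝ᵥ (G.adjMatrix ℝ *ᵥ w) := by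
        have h1 : -(u ⬝ᵥ (G.adjMatrix ℝ *ᵥ u)) ≤ w ⬝ᵥ (G.adjMatrix ℝ *ᵥ w) := by
          have e1 : u ⬝ᵥ (G.adjMatrix ℝ *ᵥ u)
              = ∑ i, ∑ j, u i * (G.adjMatrix ℝ i j * u j) := by
            simp [dotProduct, Matrix.mulVec, Finset.mul_sum]
          have e2 : w ⬝ᵥ (G.adjMatrix ℝ *ᵥ w)
              = ∑ i, ∑ j, w i * (G.adjMatrix ℝ i j * w j) := by
            simp [dotProduct, Matrix.mulVec, Finset.mul_sum]
          rw [e1, e2, ← Finset.sum_neg_distrib]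
          apply Finset.sum_le_sum; intro i _
          rw [← Finset.sum_neg_distrib]
          apply Finset.sum_le_sum; intro j _
          have hAij : (0:ℝ) ≤ G.adjMatrix ℝ i j := by
            simp [SimpleGraph.adjMatrix_apply]; positivity
          have : |u i * (G.adjMatrix ℝ i j * u j)| = w i * (G.adjMatrix ℝ i j * w j) := by
            simp [hw, abs_mul, abs_of_nonneg hAij]; split <;> simp [abs_mul]
          calc -(u i * (G.adjMatrix ℝ i j * u j)) ≤ |u i * (G.adjMatrix ℝ i j * u j)| :=
            neg_le_abs _
          _ = w i * (G.adjMatrix ℝ i j * w j) := this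
        have h2 : u ⬝ᵥ (G.adjMatrix ℝ *ᵥ u) = lam l0 := by
          rw [hAu]
          have h3 : (u ⬝ᵥ fun i => lam l0 * u i) = lam l0 * (u ⬝ᵥ u) := by
            simp only [dotProduct, Finset.mul_sum]
            exact Finset.sum_congr rfl fun i _ => by ring
          rw [h3, huu, mul_one]
        rw [h2] at h1; exact h1
      have := rayleigh w
      rw [hww, mul_one] at this
      linarith
  have hlam0 : (0:ℝ) ≤ lam i0 := le_trans (abs_nonneg _) (perron i0)
  -- abbreviations
  set a := α i0 with ha
  set S := m 0 with hS
  set A2 := m (2*k) with hA2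
  set B := m (4*k) with hB
  have heven : ∀ l, lam l ^ (2*k) = |lam l| ^ (2*k) := fun l =>
    ((even_two_mul k).pow_abs _).symm
  have hxpos : ∀ l, (0:ℝ) ≤ lam l ^ (2*k) := fun l => by
    rw [heven]; positivity
  have hxle : ∀ l, lam l ^ (2*k) ≤ lam i0 ^ (2*k) := by
    intro l
    rw [heven l, heven i0, abs_of_nonneg hlam0]
    exact pow_le_pow_left₀ (abs_nonneg _) (perron l) _
  have h4k : ∀ l : Fin n, lam l ^ (4*k) = (lam l ^ (2*k))^2 := by
    intro l; rw [← pow_mul]; ring_nf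
  -- basic positivity facts
  have haS : a ≤ S := by
    rw [hS, hm 0]
    simp only [pow_zero, mul_one]
    exact Finset.single_le_sum (fun l _ => hα l) (Finset.mem_univ i0)
  have hcauchy : A2^2 ≤ S * B := by
    rw [hS, hA2, hB, hm 0, hm (2*k), hm (4*k)]
    simp only [pow_zero, mul_one]
    apply Finset.sum_sq_le_sum_mul_sum_of_sq_eq_mul
    · intro i _; exact hα i
    · intro i _; exact mul_nonneg (hα i) (by rw [h4k]; positivity)
    · intro i _; rw [h4k]; ring
  have haB : a * B ≤ A2^2 := by
    have hstep : a * B ≤ (a * lam i0 ^ (2*k)) * A2 := by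
      rw [hB, hA2, hm (4*k), hm (2*k), Finset.mul_sum, Finset.mul_sum]
      apply Finset.sum_le_sum
      intro l _
      rw [h4k]
      nlinarith [mul_le_mul_of_nonneg_left (hxle l)
        (mul_nonneg (mul_nonneg hα0.le (hα l)) (hxpos l))]
    have hterm : a * lam i0 ^ (2*k) ≤ A2 := by
      rw [hA2, hm (2*k)]
      exact Finset.single_le_sum (fun l _ => mul_nonneg (hα l) (hxpos l))
        (Finset.mem_univ i0)
    calc a * B ≤ (a * lam i0 ^ (2*k)) * A2 := hstep
    _ ≤ A2 * A2 := mul_le_mul_of_nonneg_right hterm hm2k.le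
    _ = A2^2 := (sq A2).symm
  -- the sqrt bound
  have hda : S / a - 1 = (S - a) / a := by field_simp
  have hkey : Real.sqrt ((S/a - 1) * (S * B - A2^2)) ≤ A2 * (S - a) / a := by
    rw [hda]
    have hrhs : (0:ℝ) ≤ A2 * (S - a) / a :=
      div_nonneg (mul_nonneg hm2k.le (by linarith)) hα0.le
    have hsq : (S - a)/a * (S * B - A2^2) ≤ (A2 * (S - a) / a)^2 := by
      rw [div_mul_eq_mul_div, div_pow, div_le_div_iff₀ hα0 (by positivity)]
      have h1 : a * (S * B - A2^2) ≤ (S - a) * A2^2 := by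
        nlinarith [mul_le_mul_of_nonneg_left haB (le_trans hα0.le haS)]
      nlinarith [mul_le_mul_of_nonneg_left h1 (by linarith : (0:ℝ) ≤ S - a), hα0]
    calc Real.sqrt ((S - a)/a * (S * B - A2^2)) ≤ Real.sqrt ((A2 * (S - a) / a)^2) :=
      Real.sqrt_le_sqrt hsq
    _ = A2 * (S - a) / a := Real.sqrt_sq hrhs
  have hfin : A2 + A2 * (S - a) / a = S * A2 / a := by field_simp; ring
  linarith [hkey]
end

section
/- Let G be a finite simple undirected graph with adjacency matrix A and spectral radius ρ, and let x be a unit eigenvector of A with eigenvalue ρ (i.e., Ax = ρx, ||x||_2 = 1). Then for every vertex i with degree d_i, x_i^2 · (ρ^2 + d_i) ≤ d_i; equivalently, ρ^2 · x_i^2 ≤ (1 − x_i^2) · d_i. -/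
open Matrix Finset

/-- Corollary 4.4 of the paper: if `x` is a unit eigenvector of the adjacency matrix
with eigenvalue `ρ`, then for each vertex `i` of degree `d_i`,
`x_i² (ρ² + d_i) ≤ d_i`, equivalently `ρ² x_i² ≤ (1 - x_i²) d_i`. -/
theorem stmt_12 (n : ℕ) (hn : 1 ≤ n) (G : SimpleGraph (Fin n)) [DecidableRel G.Adj]
    (lam : Fin n → ℝ) (U : Matrix (Fin n) (Fin n) ℝ)
    (hU : Uᵀ * U = 1)
    (hAU : G.adjMatrix ℝ * U = U * Matrix.diagonal lam)
    (rho : ℝ) (hrho : IsGreatest (Set.range fun l => |lam l|) rho)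
    (x : Fin n → ℝ) (hunit : ∑ i, x i ^ 2 = 1)
    (heig : (G.adjMatrix ℝ) *ᵥ x = rho • x)
    (i : Fin n) :
    x i ^ 2 * (rho ^ 2 + (G.degree i : ℝ)) ≤ (G.degree i : ℝ) ∧
    rho ^ 2 * x i ^ 2 ≤ (1 - x i ^ 2) * (G.degree i : ℝ) := by
  have hxi : (G.adjMatrix ℝ *ᵥ x) i = ∑ j ∈ G.neighborFinset i, x j := by
    simp [SimpleGraph.adjMatrix_mulVec_apply]
  have hxi' : rho * x i = ∑ j ∈ G.neighborFinset i, x j := by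
    rw [← hxi, heig]; simp
  have hCS : (∑ j ∈ G.neighborFinset i, x j) ^ 2 ≤
      (G.degree i : ℝ) * ∑ j ∈ G.neighborFinset i, x j ^ 2 := by
    have := sq_sum_le_card_mul_sum_sq (s := G.neighborFinset i) (f := x)
    simpa [SimpleGraph.card_neighborFinset_eq_degree] using this
  have hsub : ∑ j ∈ G.neighborFinset i, x j ^ 2 ≤ 1 - x i ^ 2 := by
    have hsubset : G.neighborFinset i ⊆ Finset.univ.erase i := by
      intro j hj
      simp only [Finset.mem_erase, Finset.mem_univ, and_true]
      exact fun h => (G.notMem_neighborFinset_self i) (h ▸ hj)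
    have h1 : ∑ j ∈ G.neighborFinset i, x j ^ 2 ≤ ∑ j ∈ Finset.univ.erase i, x j ^ 2 :=
      Finset.sum_le_sum_of_subset_of_nonneg hsubset (fun j _ _ => sq_nonneg _)
    have h2 : ∑ j ∈ Finset.univ.erase i, x j ^ 2 = 1 - x i ^ 2 := by
      rw [← hunit, Finset.sum_erase_eq_sub (Finset.mem_univ i)]
    linarith
  have key : rho ^ 2 * x i ^ 2 ≤ (1 - x i ^ 2) * (G.degree i : ℝ) := by
    have h3 : (rho * x i) ^ 2 ≤ (G.degree i : ℝ) * (1 - x i ^ 2) := by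
      rw [hxi']
      calc (∑ j ∈ G.neighborFinset i, x j) ^ 2 ≤
          (G.degree i : ℝ) * ∑ j ∈ G.neighborFinset i, x j ^ 2 := hCS
        _ ≤ (G.degree i : ℝ) * (1 - x i ^ 2) :=
          mul_le_mul_of_nonneg_left hsub (Nat.cast_nonneg _)
    nlinarith
  exact ⟨by nlinarith, key⟩
end

section
/- Let G be a finite simple undirected graph with eigenvalues λ_1 ≥ λ_2 ≥ ⋯ ≥ λ_n and spectral radius ρ = λ_1, and let m_k = Σ_{l=1}^n α_l λ_l^k be a spectral moment sequence of G with nonnegative weights α_l, where α_1 is the weight attached to λ_1. Assume α_1 > 0 and m_{2k} > 0 for a given k ≥ 1, and set r_0 = (m_{2k}/α_1)^{1/(2k)}. Then m_{2k}·r_0 + m_{2k+1} − 2·α_1·r_0^{2k+1} ≤ 0; consequently every real root r of Q(r) = m_{2k}·r + m_{2k+1} − 2·α_1·r^{2k+1} with r ≥ r_0 satisfies r = r_0 or does not exist above r_0, so the largest real root of Q is at most r_0 and the bound of Q improves the bound ρ^{2k} ≤ m_{2k}/α_1. -/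
/-!
Every eigenvalue satisfies `λ_l ≤ λ_1` and `λ_l^{2k} ≥ 0`, so `m_{2k+1} ≤ λ_1 m_{2k}`;
and `α_1 λ_1^{2k} ≤ m_{2k} = α_1 r_0^{2k}` forces `λ_1 ≤ r_0`. Hence `m_{2k+1} ≤ r_0 m_{2k}`, so
`Q(r) ≤ m_{2k} (r + r_0) - 2 α_1 r^{2k+1}`. At `r_0` the right side is `0`, and for `r > r_0`
it is negative because there `α_1 r^{2k} > m_{2k}`.
-/

open Matrix Finset

section Moments

variable {ι : Type*} [Fintype ι] {α : ι → ℝ} (lam : ι → ℝ)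

theorem sum_mul_pow_two_mul_nonneg (hα : ∀ l, 0 ≤ α l) (k : ℕ) :
    0 ≤ ∑ l, α l * lam l ^ (2 * k) :=
  sum_nonneg fun l _ => mul_nonneg (hα l) ((even_two_mul k).pow_nonneg _)

theorem mul_pow_two_mul_le_sum (hα : ∀ l, 0 ≤ α l) (k : ℕ) (i : ι) :
    α i * lam i ^ (2 * k) ≤ ∑ l, α l * lam l ^ (2 * k) :=
  single_le_sum (f := fun l => α l * lam l ^ (2 * k))
    (fun l _ => mul_nonneg (hα l) ((even_two_mul k).pow_nonneg _)) (mem_univ i)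

theorem sum_mul_pow_two_mul_add_one_le (hα : ∀ l, 0 ≤ α l) {M : ℝ} (hM : ∀ l, lam l ≤ M)
    (k : ℕ) : ∑ l, α l * lam l ^ (2 * k + 1) ≤ (∑ l, α l * lam l ^ (2 * k)) * M := by
  rw [sum_mul]
  refine sum_le_sum fun l _ => ?_
  calc α l * lam l ^ (2 * k + 1) = α l * lam l ^ (2 * k) * lam l := by ring
    _ ≤ α l * lam l ^ (2 * k) * M :=
        mul_le_mul_of_nonneg_left (hM l) (mul_nonneg (hα l) ((even_two_mul k).pow_nonneg _))

end Moments

theorem le_of_pow_two_mul_le_pow_two_mul {x r : ℝ} {k : ℕ} (hr : 0 ≤ r) (hk : k ≠ 0)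
    (h : x ^ (2 * k) ≤ r ^ (2 * k)) : x ≤ r := by
  rw [← (even_two_mul k).pow_abs x] at h
  exact (le_abs_self x).trans ((pow_le_pow_iff_left₀ (abs_nonneg x) hr (by omega)).1 h)

theorem rpow_one_div_two_mul_pow {x : ℝ} (hx : 0 ≤ x) {k : ℕ} (hk : k ≠ 0) :
    (x ^ (1 / (2 * (k : ℝ)))) ^ (2 * k) = x := by
  have h : (x ^ ((2 * k : ℕ) : ℝ)⁻¹) ^ (2 * k) = x := Real.rpow_inv_natCast_pow hx (by omega)
  rwa [Nat.cast_mul, Nat.cast_two, ← one_div] at h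

def boundPoly (a m₀ m₁ : ℝ) (k : ℕ) (r : ℝ) : ℝ :=
  m₀ * r + m₁ - 2 * a * r ^ (2 * k + 1)

section BoundPoly

variable {a m₀ m₁ r₀ : ℝ} {k : ℕ} (ha : 0 < a) (hr₀ : 0 ≤ r₀)
  (hm₀ : a * r₀ ^ (2 * k) = m₀) (hm₁ : m₁ ≤ m₀ * r₀)
include hm₀ hm₁

theorem boundPoly_nonpos : boundPoly a m₀ m₁ k r₀ ≤ 0 := by
  unfold boundPoly
  have : 2 * a * r₀ ^ (2 * k + 1) = 2 * (a * r₀ ^ (2 * k)) * r₀ := by ring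
  rw [this, hm₀]
  linarith

include ha hr₀

theorem boundPoly_neg_of_lt {r : ℝ} (hk : k ≠ 0) (hr : r₀ < r) :
    boundPoly a m₀ m₁ k r < 0 := by
  have hr_pos : 0 < r := hr₀.trans_lt hr
  have hm₀_nonneg : 0 ≤ m₀ := hm₀ ▸ by positivity
  have hm₀_lt : m₀ < a * r ^ (2 * k) :=
    hm₀ ▸ mul_lt_mul_of_pos_left (pow_lt_pow_left₀ hr hr₀ (by omega)) ha
  have : m₀ * r < a * r ^ (2 * k + 1) := by
    rw [pow_succ, ← mul_assoc]
    exact mul_lt_mul_of_pos_right hm₀_lt hr_pos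
  unfold boundPoly
  linarith [mul_le_mul_of_nonneg_left hr.le hm₀_nonneg]

end BoundPoly

theorem stmt_18_general (n : ℕ) (hn : 1 ≤ n)
    (lam : Fin n → ℝ) (hlam : Antitone lam)
    (α : Fin n → ℝ) (hα : ∀ l, 0 ≤ α l) (hα0 : 0 < α ⟨0, hn⟩)
    (m : ℕ → ℝ) (hm : ∀ k, m k = ∑ l, α l * lam l ^ k)
    (k : ℕ) (hk : 1 ≤ k)
    (r0 : ℝ) (hr0 : r0 = (m (2 * k) / α ⟨0, hn⟩) ^ (1 / (2 * (k : ℝ)))) :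
    m (2 * k) * r0 + m (2 * k + 1) - 2 * α ⟨0, hn⟩ * r0 ^ (2 * k + 1) ≤ 0 ∧
    ∀ r : ℝ, m (2 * k) * r + m (2 * k + 1) - 2 * α ⟨0, hn⟩ * r ^ (2 * k + 1) = 0 →
      r ≤ r0 := by
  set i₀ : Fin n := ⟨0, hn⟩
  have hk₀ : k ≠ 0 := by omega
  have hm_even : 0 ≤ m (2 * k) := hm _ ▸ sum_mul_pow_two_mul_nonneg lam hα k
  have hr0_nonneg : 0 ≤ r0 := hr0 ▸ by positivity
  have hr0_pow : α i₀ * r0 ^ (2 * k) = m (2 * k) := by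
    rw [hr0, rpow_one_div_two_mul_pow (div_nonneg hm_even hα0.le) hk₀]
    field_simp
  have hlam_le : lam i₀ ≤ r0 := by
    refine le_of_pow_two_mul_le_pow_two_mul hr0_nonneg hk₀ (le_of_mul_le_mul_left ?_ hα0)
    exact hr0_pow ▸ hm (2 * k) ▸ mul_pow_two_mul_le_sum lam hα k i₀
  have hm_odd : m (2 * k + 1) ≤ m (2 * k) * r0 := by
    rw [hm, hm]
    have hlam_max l : lam l ≤ lam i₀ := hlam (Fin.le_def.mpr l.val.zero_le)
    exact (sum_mul_pow_two_mul_add_one_le lam hα hlam_max k).trans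
      (mul_le_mul_of_nonneg_left hlam_le (hm (2 * k) ▸ hm_even))
  exact ⟨boundPoly_nonpos hr0_pow hm_odd, fun r hr =>
    not_lt.1 fun hlt => (boundPoly_neg_of_lt hα0 hr0_nonneg hr0_pow hm_odd hk₀ hlt).ne hr⟩

/-- The tightness claim in Corollary 4.10 of the paper: with
`r₀ = (m_{2k}/α₁)^{1/(2k)}` one has `Q(r₀) ≤ 0` for
`Q(r) = m_{2k} r + m_{2k+1} - 2 α₁ r^{2k+1}`, and every real root of `Q` is at most
`r₀`; hence the implicit bound improves the bound `ρ^{2k} ≤ m_{2k}/α₁`. -/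
theorem stmt_18 (n : ℕ) (hn : 1 ≤ n) (G : SimpleGraph (Fin n)) [DecidableRel G.Adj]
    (lam : Fin n → ℝ) (hlam : Antitone lam)
    (U : Matrix (Fin n) (Fin n) ℝ)
    (hU : Uᵀ * U = 1)
    (hAU : G.adjMatrix ℝ * U = U * Matrix.diagonal lam)
    (rho : ℝ) (hrho : IsGreatest (Set.range fun l => |lam l|) rho)
    (α : Fin n → ℝ) (hα : ∀ l, 0 ≤ α l) (hα0 : 0 < α ⟨0, hn⟩)
    (m : ℕ → ℝ) (hm : ∀ k, m k = ∑ l, α l * lam l ^ k)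
    (k : ℕ) (hk : 1 ≤ k) (hm2k : 0 < m (2 * k))
    (r0 : ℝ) (hr0 : r0 = (m (2 * k) / α ⟨0, hn⟩) ^ (1 / (2 * (k : ℝ)))) :
    m (2 * k) * r0 + m (2 * k + 1) - 2 * α ⟨0, hn⟩ * r0 ^ (2 * k + 1) ≤ 0 ∧
    ∀ r : ℝ, m (2 * k) * r + m (2 * k + 1) - 2 * α ⟨0, hn⟩ * r ^ (2 * k + 1) = 0 →
      r ≤ r0 :=
  stmt_18_general n hn lam hlam α hα hα0 m hm k hk r0 hr0
end

section
/- Let G be a finite simple undirected graph with at least one edge, adjacency matrix A, spectral radius ρ, and clique number ω = ω(G) ≥ 2. Then for every k ∈ ℕ, ρ·w_{2k} + w_{2k+1} ≥ 2·(ω/(ω−1))·ρ^{2k+2}, where w_j = Σ_{i,l}(A^j)_{il} is the number of walks of length j in G; in particular ρ is at most the largest real root of the polynomial Q(r) = w_{2k}·r + w_{2k+1} − 2·(ω/(ω−1))·r^{2k+2}. -/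
open Matrix Finset

section MSaux
variable {n : ℕ} (G : SimpleGraph (Fin n)) [DecidableRel G.Adj]

private lemma stmt19_bilin_symm (v w : Fin n → ℝ) :
    v ⬝ᵥ (G.adjMatrix ℝ *ᵥ w) = w ⬝ᵥ (G.adjMatrix ℝ *ᵥ v) := by
  simp only [dotProduct, mulVec, Finset.mul_sum]
  rw [Finset.sum_comm]
  refine Finset.sum_congr rfl fun p _ => Finset.sum_congr rfl fun q _ => ?_
  by_cases hpq : G.Adj p q
  · simp [hpq, G.adj_comm p q |>.mp hpq]; ring
  · have hqp : ¬ G.Adj q p := fun hh => hpq ((G.adj_comm p q).mpr hh)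
    simp [hpq, hqp]

private lemma stmt19_single_quad (p q : Fin n) (c d : ℝ) :
    Pi.single p c ⬝ᵥ (G.adjMatrix ℝ *ᵥ Pi.single q d) = c * (G.adjMatrix ℝ p q * d) := by
  rw [single_dotProduct]
  congr 1
  simp [mulVec, dotProduct_single]

private lemma stmt19_quad_expand (i j : Fin n) (hadj : ¬ G.Adj i j)
    (z : Fin n → ℝ) (c d : ℝ) :
    (z + Pi.single i c + Pi.single j d) ⬝ᵥ
        (G.adjMatrix ℝ *ᵥ (z + Pi.single i c + Pi.single j d)) =
      z ⬝ᵥ (G.adjMatrix ℝ *ᵥ z) + 2 * c * ((G.adjMatrix ℝ *ᵥ z) i)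
        + 2 * d * ((G.adjMatrix ℝ *ᵥ z) j) := by
  have hadj' : ¬ G.Adj j i := fun h => hadj ((G.adj_comm i j).mpr h)
  have h1 : z ⬝ᵥ (G.adjMatrix ℝ *ᵥ Pi.single i c) = c * (G.adjMatrix ℝ *ᵥ z) i := by
    rw [stmt19_bilin_symm, single_dotProduct]
  have h2 : z ⬝ᵥ (G.adjMatrix ℝ *ᵥ Pi.single j d) = d * (G.adjMatrix ℝ *ᵥ z) j := by
    rw [stmt19_bilin_symm, single_dotProduct]
  simp only [mulVec_add, dotProduct_add, add_dotProduct, h1, h2, single_dotProduct,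
    stmt19_single_quad]
  simp [hadj, hadj']
  ring

private lemma stmt19_ms_clique (ω : ℕ) (hω2 : 2 ≤ ω)
    (hcl : ∀ t : Finset (Fin n), G.IsClique (t : Set (Fin n)) → t.card ≤ ω)
    (y : Fin n → ℝ)
    (hc : G.IsClique ((univ.filter fun i => y i ≠ 0 : Finset (Fin n)) : Set (Fin n))) :
    y ⬝ᵥ (G.adjMatrix ℝ *ᵥ y) ≤ (1 - 1/(ω:ℝ)) * (∑ i, y i)^2 := by
  set s : Finset (Fin n) := univ.filter fun i => y i ≠ 0 with hs
  have hSs : ∑ i, y i = ∑ i ∈ s, y i := (Finset.sum_filter_ne_zero _).symm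
  have hcard : s.card ≤ ω := hcl s hc
  have hQ : y ⬝ᵥ (G.adjMatrix ℝ *ᵥ y) = (∑ i ∈ s, y i)^2 - ∑ i ∈ s, (y i)^2 := by
    have e1 : y ⬝ᵥ (G.adjMatrix ℝ *ᵥ y)
        = ∑ i ∈ s, ∑ j ∈ s, y i * (G.adjMatrix ℝ i j * y j) := by
      simp only [dotProduct, mulVec]
      rw [← Finset.sum_filter_of_ne (p := fun i => y i ≠ 0)]
      · refine Finset.sum_congr rfl fun i _ => ?_
        rw [Finset.mul_sum, ← Finset.sum_filter_of_ne (p := fun j => y j ≠ 0)]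
        intro j _ hj hyj
        apply hj
        simp [hyj]
      · intro i _ hi hyi
        apply hi
        simp [hyi]
    rw [e1]
    have e2 : ∀ i ∈ s, ∑ j ∈ s, y i * (G.adjMatrix ℝ i j * y j)
        = (∑ j ∈ s, y i * y j) - y i * y i := by
      intro i hi
      have : ∑ j ∈ s, (y i * y j - y i * (G.adjMatrix ℝ i j * y j)) = y i * y i := by
        rw [Finset.sum_eq_single i]
        · simp
        · intro j hj hji
          have hadj : G.Adj i j := hc (by exact_mod_cast hi) (by exact_mod_cast hj)
            (fun h => hji h.symm)
          simp [hadj]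
        · intro h; exact absurd hi h
      rw [Finset.sum_sub_distrib] at this
      linarith
    rw [Finset.sum_congr rfl e2, Finset.sum_sub_distrib]
    have : ∑ i ∈ s, ∑ j ∈ s, y i * y j = (∑ i ∈ s, y i)^2 := by
      rw [sq, Finset.sum_mul_sum]
    rw [this]
    congr 1
    exact Finset.sum_congr rfl fun i _ => (sq (y i)) ▸ (pow_two (y i)).symm
  have hω0 : (0:ℝ) < ω := by positivity
  have hP0 : 0 ≤ ∑ i ∈ s, (y i)^2 := Finset.sum_nonneg fun i _ => sq_nonneg _
  have hcs : (∑ i ∈ s, y i)^2 ≤ (ω:ℝ) * ∑ i ∈ s, (y i)^2 := by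
    calc (∑ i ∈ s, y i)^2 ≤ s.card * ∑ i ∈ s, (y i)^2 := by
          exact_mod_cast sq_sum_le_card_mul_sum_sq (s := s) (f := y)
      _ ≤ (ω:ℝ) * ∑ i ∈ s, (y i)^2 := by
          apply mul_le_mul_of_nonneg_right _ hP0
          exact_mod_cast hcard
  rw [hQ, hSs]
  have hdiv : (∑ i ∈ s, y i)^2 / (ω:ℝ) ≤ ∑ i ∈ s, (y i)^2 :=
    (div_le_iff₀ hω0).mpr (by linarith)
  have : (1 - 1/(ω:ℝ)) * (∑ i ∈ s, y i)^2
      = (∑ i ∈ s, y i)^2 - (∑ i ∈ s, y i)^2 / (ω:ℝ) := by ring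
  rw [this]
  linarith

private lemma stmt19_ms_shift (i j : Fin n) (hij : i ≠ j) (hadj : ¬ G.Adj i j)
    (y : Fin n → ℝ) (hy : ∀ l, 0 ≤ y l) (hi : y i ≠ 0) (hj : y j ≠ 0)
    (hab : (G.adjMatrix ℝ *ᵥ y) j ≤ (G.adjMatrix ℝ *ᵥ y) i) :
    ∃ y' : Fin n → ℝ, (∀ l, 0 ≤ y' l) ∧
      (univ.filter fun l => y' l ≠ 0) = (univ.filter fun l => y l ≠ 0).erase j ∧
      (∑ l, y' l) = (∑ l, y l) ∧
      y ⬝ᵥ (G.adjMatrix ℝ *ᵥ y) ≤ y' ⬝ᵥ (G.adjMatrix ℝ *ᵥ y') := by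
  classical
  have hadj' : ¬ G.Adj j i := fun h => hadj ((G.adj_comm i j).mpr h)
  set z : Fin n → ℝ := fun l => if l = i ∨ l = j then 0 else y l with hz
  have hdecy : y = z + Pi.single i (y i) + Pi.single j (y j) := by
    funext l
    by_cases hli : l = i
    · subst hli; simp [hz, Pi.single_apply, hij]
    · by_cases hlj : l = j
      · subst hlj
        have : (l:Fin n) ≠ i := fun h => hli h
        simp [hz, Pi.single_apply, this, Ne.symm hij]
      · simp [hz, Pi.single_apply, hli, hlj]
  set y' : Fin n → ℝ := z + Pi.single i (y i + y j) + Pi.single j 0 with hy'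
  have hy'i : y' i = y i + y j := by
    simp [hy', hz, Pi.single_apply, hij, Ne.symm hij]
  have hy'j : y' j = 0 := by
    simp [hy', hz, Pi.single_apply, Ne.symm hij]
  have hy'l : ∀ l, l ≠ i → l ≠ j → y' l = y l := by
    intro l hli hlj
    simp [hy', hz, Pi.single_apply, hli, hlj]
  have hyi : 0 < y i := lt_of_le_of_ne (hy i) (Ne.symm hi)
  have hyj : 0 < y j := lt_of_le_of_ne (hy j) (Ne.symm hj)
  refine ⟨y', ?_, ?_, ?_, ?_⟩
  · intro l
    by_cases hli : l = i
    · subst hli; rw [hy'i]; positivity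
    · by_cases hlj : l = j
      · subst hlj; rw [hy'j]
      · rw [hy'l l hli hlj]; exact hy l
  · ext l
    simp only [Finset.mem_filter, Finset.mem_univ, true_and, Finset.mem_erase]
    by_cases hli : l = i
    · subst hli
      constructor
      · intro _; exact ⟨hij, hi⟩
      · intro _; rw [hy'i]; positivity
    · by_cases hlj : l = j
      · subst hlj; simp [hy'j]
      · rw [hy'l l hli hlj]; tauto
  · have h1 : ∑ l, y l = (∑ l, z l) + y i + y j := by
      conv_lhs => rw [hdecy]
      simp [Finset.sum_add_distrib]
    have h2 : ∑ l, y' l = (∑ l, z l) + (y i + y j) := by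
      rw [hy']
      simp [Finset.sum_add_distrib]
    rw [h1, h2]; ring
  · have hAzi : (G.adjMatrix ℝ *ᵥ z) i = (G.adjMatrix ℝ *ᵥ y) i := by
      conv_rhs => rw [hdecy]
      simp only [mulVec_add]
      have e1 : (G.adjMatrix ℝ *ᵥ Pi.single i (y i)) i = 0 := by
        simp [mulVec, dotProduct_single]
      have e2 : (G.adjMatrix ℝ *ᵥ Pi.single j (y j)) i = 0 := by
        simp [mulVec, dotProduct_single, hadj]
      simp [e1, e2, hadj, hadj']
    have hAzj : (G.adjMatrix ℝ *ᵥ z) j = (G.adjMatrix ℝ *ᵥ y) j := by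
      conv_rhs => rw [hdecy]
      simp only [mulVec_add]
      have e1 : (G.adjMatrix ℝ *ᵥ Pi.single i (y i)) j = 0 := by
        simp [mulVec, dotProduct_single, hadj']
      have e2 : (G.adjMatrix ℝ *ᵥ Pi.single j (y j)) j = 0 := by
        simp [mulVec, dotProduct_single]
      simp [e1, e2, hadj, hadj']
    have hQy : y ⬝ᵥ (G.adjMatrix ℝ *ᵥ y)
        = z ⬝ᵥ (G.adjMatrix ℝ *ᵥ z) + 2 * (y i) * ((G.adjMatrix ℝ *ᵥ z) i)
          + 2 * (y j) * ((G.adjMatrix ℝ *ᵥ z) j) := by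
      conv_lhs => rw [hdecy]
      exact stmt19_quad_expand G i j hadj z (y i) (y j)
    have hQy' : y' ⬝ᵥ (G.adjMatrix ℝ *ᵥ y')
        = z ⬝ᵥ (G.adjMatrix ℝ *ᵥ z) + 2 * (y i + y j) * ((G.adjMatrix ℝ *ᵥ z) i) := by
      rw [hy', stmt19_quad_expand G i j hadj z (y i + y j) 0]
      ring
    rw [hQy, hQy', hAzi, hAzj]
    nlinarith [hab, hyj.le]

/-- The Motzkin–Straus bound: for a nonnegative vector `y`,
`yᵀ A y ≤ (1 - 1/ω) (∑ y)²` where `ω` bounds the clique number. -/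
private lemma stmt19_motzkinStraus (ω : ℕ) (hω2 : 2 ≤ ω)
    (hcl : ∀ t : Finset (Fin n), G.IsClique (t : Set (Fin n)) → t.card ≤ ω)
    (y : Fin n → ℝ) (hy : ∀ i, 0 ≤ y i) :
    y ⬝ᵥ (G.adjMatrix ℝ *ᵥ y) ≤ (1 - 1/(ω:ℝ)) * (∑ i, y i)^2 := by
  suffices H : ∀ m : ℕ, ∀ y : Fin n → ℝ, (∀ i, 0 ≤ y i) →
      (univ.filter fun i => y i ≠ 0).card ≤ m →
      y ⬝ᵥ (G.adjMatrix ℝ *ᵥ y) ≤ (1 - 1/(ω:ℝ)) * (∑ i, y i)^2 from H _ y hy le_rfl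
  intro m
  induction m with
  | zero =>
    intro y hy hcard
    have hy0 : y = 0 := by
      funext i
      show y i = 0
      by_contra hi
      have hmem : i ∈ univ.filter (fun i => y i ≠ 0) := by simp [hi]
      have := Finset.card_pos.mpr ⟨i, hmem⟩
      omega
    simp [hy0]
  | succ m ih =>
    intro y hy hcard
    by_cases hc : G.IsClique ((univ.filter fun i => y i ≠ 0 : Finset (Fin n)) : Set (Fin n))
    · exact stmt19_ms_clique G ω hω2 hcl y hc
    · rw [SimpleGraph.isClique_iff, Set.Pairwise] at hc
      push_neg at hc
      obtain ⟨i, hi, j, hj, hij, hnadj⟩ := hc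
      have hi' : y i ≠ 0 := by simpa using hi
      have hj' : y j ≠ 0 := by simpa using hj
      have key : ∀ p q : Fin n, p ≠ q → ¬ G.Adj p q → y p ≠ 0 → y q ≠ 0 →
          (G.adjMatrix ℝ *ᵥ y) q ≤ (G.adjMatrix ℝ *ᵥ y) p →
          y ⬝ᵥ (G.adjMatrix ℝ *ᵥ y) ≤ (1 - 1/(ω:ℝ)) * (∑ i, y i)^2 := by
        intro p q hpq hpqadj hp hq hab
        obtain ⟨y', hy'pos, hsupp, hsum, hle⟩ :=
          stmt19_ms_shift G p q hpq hpqadj y hy hp hq hab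
        have hq' : q ∈ univ.filter (fun l => y l ≠ 0) := by simp [hq]
        have hcard' : (univ.filter fun l => y' l ≠ 0).card ≤ m := by
          rw [hsupp, Finset.card_erase_of_mem hq']
          omega
        calc y ⬝ᵥ (G.adjMatrix ℝ *ᵥ y) ≤ y' ⬝ᵥ (G.adjMatrix ℝ *ᵥ y') := hle
          _ ≤ (1 - 1/(ω:ℝ)) * (∑ i, y' i)^2 := ih y' hy'pos hcard'
          _ = (1 - 1/(ω:ℝ)) * (∑ i, y i)^2 := by rw [hsum]
      rcases le_total ((G.adjMatrix ℝ *ᵥ y) j) ((G.adjMatrix ℝ *ᵥ y) i) with hab | hab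
      · exact key i j hij hnadj hi' hj' hab
      · exact key j i hij.symm (fun h => hnadj ((G.adj_comm i j).mpr h)) hj' hi' hab

private lemma stmt19_pow_entry_nonneg (j : ℕ) (i l : Fin n) :
    0 ≤ ((G.adjMatrix ℝ) ^ j) i l := by
  induction j generalizing i l with
  | zero => by_cases h : i = l <;> simp [Matrix.one_apply, h]
  | succ j ih =>
    rw [pow_succ, Matrix.mul_apply]
    refine Finset.sum_nonneg fun p _ => mul_nonneg (ih i p) ?_
    by_cases h : G.Adj p l <;> simp [h]

private lemma stmt19_abs_quad (x : Fin n → ℝ) :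
    |x ⬝ᵥ (G.adjMatrix ℝ *ᵥ x)| ≤
      (fun i => |x i|) ⬝ᵥ (G.adjMatrix ℝ *ᵥ (fun i => |x i|)) := by
  simp only [dotProduct, Matrix.mulVec]
  calc |∑ i, x i * ∑ j, G.adjMatrix ℝ i j * x j|
      ≤ ∑ i, |x i * ∑ j, G.adjMatrix ℝ i j * x j| := Finset.abs_sum_le_sum_abs _ _
    _ ≤ ∑ i, |x i| * ∑ j, G.adjMatrix ℝ i j * |x j| := by
        refine Finset.sum_le_sum fun i _ => ?_
        rw [abs_mul]
        refine mul_le_mul_of_nonneg_left ?_ (abs_nonneg _)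
        calc |∑ j, G.adjMatrix ℝ i j * x j| ≤ ∑ j, |G.adjMatrix ℝ i j * x j| :=
              Finset.abs_sum_le_sum_abs _ _
          _ ≤ ∑ j, G.adjMatrix ℝ i j * |x j| := by
              refine Finset.sum_le_sum fun j _ => ?_
              rw [abs_mul]
              have : |G.adjMatrix ℝ i j| = G.adjMatrix ℝ i j := by
                by_cases h : G.Adj i j <;> simp [h]
              rw [this]


private lemma stmt19_root_bound (w0 w1 c rho : ℝ) (hw0 : 0 ≤ w0) (hw1 : 0 ≤ w1)
    (hc : 0 < c) (k : ℕ)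
    (h1 : c * rho ^ (2*k+2) ≤ rho * w0 + w1)
    (r : ℝ) (hr : IsGreatest {r : ℝ | w0 * r + w1 - c * r ^ (2*k+2) = 0} r) :
    rho ≤ r := by
  set f : ℝ → ℝ := fun t => w0 * t + w1 - c * t ^ (2*k+2) with hf
  have hfrho : 0 ≤ f rho := by simp only [hf]; linarith
  set M : ℝ := max rho ((w0 + w1) / c + 1) with hM
  have hM1 : (1:ℝ) ≤ M := by
    have h0 : 0 ≤ (w0 + w1)/c := by positivity
    have := le_max_right rho ((w0 + w1) / c + 1)
    linarith
  have hMrho : rho ≤ M := le_max_left _ _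
  have hcM : w0 + w1 + c ≤ c * M := by
    have h2 : (w0 + w1) / c + 1 ≤ M := le_max_right _ _
    have := (div_le_iff₀ hc).mp (by linarith : (w0 + w1)/c ≤ M - 1)
    nlinarith
  have hfM : f M < 0 := by
    have hpow : M ^ 2 ≤ M ^ (2*k+2) := pow_le_pow_right₀ hM1 (by omega)
    have : c * M^2 ≤ c * M ^ (2*k+2) := by nlinarith
    have h3 : w0 * M + w1 < c * M^2 := by nlinarith
    simp only [hf]; nlinarith
  have hcont : ContinuousOn f (Set.Icc rho M) := (by fun_prop : Continuous f).continuousOn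
  have := intermediate_value_Icc' hMrho hcont
  have h0 : (0:ℝ) ∈ Set.Icc (f M) (f rho) := ⟨hfM.le, hfrho⟩
  obtain ⟨t, ht, hft⟩ := this h0
  exact le_trans ht.1 (hr.2 hft)

end MSaux

set_option maxHeartbeats 2000000 in
/-- Corollary 4.11 of the paper: for a graph with at least one edge and clique number
`ω ≥ 2`, `ρ w_{2k} + w_{2k+1} ≥ 2 (ω/(ω-1)) ρ^{2k+2}`; in particular `ρ` is at most the
largest real root of `Q(r) = w_{2k} r + w_{2k+1} - 2 (ω/(ω-1)) r^{2k+2}`. -/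
theorem stmt_19 (n : ℕ) (hn : 1 ≤ n) (G : SimpleGraph (Fin n)) [DecidableRel G.Adj]
    (he : G.edgeFinset.Nonempty)
    (lam : Fin n → ℝ) (U : Matrix (Fin n) (Fin n) ℝ)
    (hU : Uᵀ * U = 1)
    (hAU : G.adjMatrix ℝ * U = U * Matrix.diagonal lam)
    (rho : ℝ) (hrho : IsGreatest (Set.range fun l => |lam l|) rho)
    (ω : ℕ) (hω : IsGreatest {k : ℕ | ∃ t : Finset (Fin n), G.IsNClique k t} ω)
    (hω2 : 2 ≤ ω)
    (k : ℕ) :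
    2 * ((ω : ℝ) / ((ω : ℝ) - 1)) * rho ^ (2 * k + 2) ≤
      rho * (∑ i, ∑ l, ((G.adjMatrix ℝ) ^ (2 * k)) i l) +
        (∑ i, ∑ l, ((G.adjMatrix ℝ) ^ (2 * k + 1)) i l) ∧
    ∀ r : ℝ, IsGreatest {r : ℝ |
        (∑ i, ∑ l, ((G.adjMatrix ℝ) ^ (2 * k)) i l) * r +
          (∑ i, ∑ l, ((G.adjMatrix ℝ) ^ (2 * k + 1)) i l) -
          2 * ((ω : ℝ) / ((ω : ℝ) - 1)) * r ^ (2 * k + 2) = 0} r →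
      rho ≤ r := by
  classical
  -- basic facts
  have hcl : ∀ t : Finset (Fin n), G.IsClique (t : Set (Fin n)) → t.card ≤ ω :=
    fun t ht => hω.2 ⟨t, ht, rfl⟩
  have hub : ∀ l, |lam l| ≤ rho := fun l => hrho.2 ⟨l, rfl⟩
  have rho0 : 0 ≤ rho := le_trans (abs_nonneg _) (hub ⟨0, hn⟩)
  obtain ⟨l0, hl0⟩ := hrho.1
  have hUU : U * Uᵀ = 1 := mul_eq_one_comm.mp hU
  have hA : (G.adjMatrix ℝ) = U * Matrix.diagonal lam * Uᵀ := by
    calc (G.adjMatrix ℝ) = (G.adjMatrix ℝ * U) * Uᵀ := by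
          rw [Matrix.mul_assoc, hUU, Matrix.mul_one]
      _ = U * Matrix.diagonal lam * Uᵀ := by rw [hAU]
  have hpow : ∀ j : ℕ,
      (G.adjMatrix ℝ) ^ j = U * Matrix.diagonal (fun l => lam l ^ j) * Uᵀ := by
    intro j
    induction j with
    | zero => simp [hUU]
    | succ j ihj =>
      rw [pow_succ, ihj, hA]
      calc U * Matrix.diagonal (fun l => lam l ^ j) * Uᵀ * (U * Matrix.diagonal lam * Uᵀ)
          = U * Matrix.diagonal (fun l => lam l ^ j) * (Uᵀ * U) * Matrix.diagonal lam * Uᵀ := by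
            simp only [Matrix.mul_assoc]
        _ = U * (Matrix.diagonal (fun l => lam l ^ j) * Matrix.diagonal lam) * Uᵀ := by
            rw [hU]; simp only [Matrix.mul_assoc, Matrix.one_mul]
        _ = U * Matrix.diagonal (fun l => lam l ^ (j+1)) * Uᵀ := by
            rw [Matrix.diagonal_mul_diagonal]
            simp [pow_succ]
  -- quadratic form identity
  have hquad : ∀ (j : ℕ) (v : Fin n → ℝ),
      v ⬝ᵥ ((G.adjMatrix ℝ) ^ j *ᵥ v) = ∑ l, lam l ^ j * ((Uᵀ *ᵥ v) l)^2 := by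
    intro j v
    rw [hpow j]
    rw [← Matrix.mulVec_mulVec, ← Matrix.mulVec_mulVec]
    rw [Matrix.dotProduct_mulVec v U, ← Matrix.mulVec_transpose]
    rw [dotProduct]
    refine Finset.sum_congr rfl fun l _ => ?_
    rw [Matrix.mulVec_diagonal]
    ring
  -- the Perron-like vector
  set x : Fin n → ℝ := fun i => U i l0 with hx
  have hx1 : ∑ i, x i * x i = 1 := by
    have := congrFun (congrFun hU l0) l0
    rw [Matrix.mul_apply] at this
    simpa [Matrix.transpose_apply] using this
  have hAx : (G.adjMatrix ℝ) *ᵥ x = fun i => lam l0 * x i := by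
    funext i
    have := congrFun (congrFun hAU i) l0
    rw [Matrix.mul_apply, Matrix.mul_apply] at this
    simp only [Matrix.mulVec, dotProduct]
    rw [this]
    rw [Finset.sum_eq_single l0]
    · simp [Matrix.diagonal]; ring
    · intro b _ hb; rw [Matrix.diagonal_apply_ne _ hb, mul_zero]
    · simp
  have hxQ : x ⬝ᵥ (G.adjMatrix ℝ *ᵥ x) = lam l0 := by
    rw [hAx]
    simp only [dotProduct]
    calc ∑ i, x i * (lam l0 * x i) = lam l0 * ∑ i, x i * x i := by
          rw [Finset.mul_sum]; exact Finset.sum_congr rfl fun i _ => by ring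
      _ = lam l0 := by rw [hx1, mul_one]
  set y : Fin n → ℝ := fun i => |x i| with hy
  have hy0 : ∀ i, 0 ≤ y i := fun i => abs_nonneg _
  have hyy : ∑ i, y i * y i = 1 := by
    rw [← hx1]
    exact Finset.sum_congr rfl fun i _ => abs_mul_abs_self _
  set z : Fin n → ℝ := Uᵀ *ᵥ y with hzdef
  have hz1 : ∑ l, (z l)^2 = 1 := by
    have h0 := hquad 0 y
    simp only [pow_zero, Matrix.one_mulVec, one_mul] at h0
    rw [hzdef, ← h0]
    simp only [dotProduct]
    rw [← hyy]
  have hQy1 : y ⬝ᵥ (G.adjMatrix ℝ *ᵥ y) = ∑ l, lam l * (z l)^2 := by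
    have := hquad 1 y
    rw [pow_one] at this
    simpa [← hzdef] using this
  have hrleQ : rho ≤ y ⬝ᵥ (G.adjMatrix ℝ *ᵥ y) := by
    have h1 := stmt19_abs_quad G x
    rw [hxQ] at h1
    calc rho = |lam l0| := hl0.symm
      _ ≤ (fun i => |x i|) ⬝ᵥ (G.adjMatrix ℝ *ᵥ (fun i => |x i|)) := h1
      _ = y ⬝ᵥ (G.adjMatrix ℝ *ᵥ y) := rfl
  have hQler : y ⬝ᵥ (G.adjMatrix ℝ *ᵥ y) ≤ rho := by
    rw [hQy1]
    calc ∑ l, lam l * (z l)^2 ≤ ∑ l, rho * (z l)^2 := by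
          refine Finset.sum_le_sum fun l _ => ?_
          exact mul_le_mul_of_nonneg_right
            (le_trans (le_abs_self _) (hub l)) (sq_nonneg _)
      _ = rho := by rw [← Finset.mul_sum, hz1, mul_one]
  have hQrho : y ⬝ᵥ (G.adjMatrix ℝ *ᵥ y) = rho := le_antisymm hQler hrleQ
  -- eigenvalue rigidity: z is supported on the rho-eigenspace
  have hzero : ∀ l, (rho - lam l) * (z l)^2 = 0 := by
    have hsum0 : ∑ l, (rho - lam l) * (z l)^2 = 0 := by
      have : ∑ l, (rho - lam l) * (z l)^2
          = rho * (∑ l, (z l)^2) - ∑ l, lam l * (z l)^2 := by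
        rw [Finset.mul_sum, ← Finset.sum_sub_distrib]
        exact Finset.sum_congr rfl fun l _ => by ring
      rw [this, hz1, mul_one, ← hQy1, hQrho, sub_self]
    have hnn : ∀ l ∈ (univ : Finset (Fin n)), 0 ≤ (rho - lam l) * (z l)^2 := by
      intro l _
      apply mul_nonneg _ (sq_nonneg _)
      have := hub l
      have := neg_abs_le (lam l)
      linarith [le_abs_self (lam l)]
    intro l
    exact (Finset.sum_eq_zero_iff_of_nonneg hnn).mp hsum0 l (Finset.mem_univ l)
  have hTlam : ∀ l, z l ≠ 0 → lam l = rho := by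
    intro l hzl
    have := hzero l
    rcases mul_eq_zero.mp this with h | h
    · linarith [sub_eq_zero.mp h]
    · exact absurd ((pow_eq_zero_iff two_ne_zero).mp h) hzl
  -- Motzkin–Straus
  have hMS : rho ≤ (1 - 1/(ω:ℝ)) * (∑ i, y i)^2 := by
    rw [← hQrho]
    exact stmt19_motzkinStraus G ω hω2 hcl y hy0
  -- the fundamental weights
  set s : Fin n → ℝ := Uᵀ *ᵥ (fun _ => (1:ℝ)) with hsdef
  have hwalk : ∀ j : ℕ, ∑ i, ∑ l, ((G.adjMatrix ℝ) ^ j) i l = ∑ l, lam l ^ j * (s l)^2 := by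
    intro j
    have h1 : ∑ i, ∑ l, ((G.adjMatrix ℝ) ^ j) i l
        = (fun _ => (1:ℝ)) ⬝ᵥ ((G.adjMatrix ℝ) ^ j *ᵥ (fun _ => (1:ℝ))) := by
      simp [dotProduct, Matrix.mulVec]
    rw [h1, hquad j, ← hsdef]
  -- sum of y in terms of s and z
  have hyUz : y = U *ᵥ z := by
    rw [hzdef, Matrix.mulVec_mulVec, hUU, Matrix.one_mulVec]
  have hsumy : ∑ i, y i = ∑ l, s l * z l := by
    have h1 : ∑ i, y i = (fun _ => (1:ℝ)) ⬝ᵥ y := by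
      simp [dotProduct]
    rw [h1, hyUz, Matrix.dotProduct_mulVec, ← Matrix.mulVec_transpose, ← hsdef]
    rfl
  set T : Finset (Fin n) := univ.filter fun l => z l ≠ 0 with hT
  have hsumyT : ∑ l, s l * z l = ∑ l ∈ T, s l * z l := by
    rw [hT, Finset.sum_filter_of_ne]
    intro l _ h hzl
    exact h (by simp [hzl])
  have hCS : (∑ l ∈ T, s l * z l)^2 ≤ (∑ l ∈ T, (s l)^2) * (∑ l ∈ T, (z l)^2) :=
    Finset.sum_mul_sq_le_sq_mul_sq T s z
  have hTz1 : ∑ l ∈ T, (z l)^2 ≤ 1 := by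
    rw [← hz1]
    exact Finset.sum_le_sum_of_subset_of_nonneg (Finset.subset_univ T)
      (fun l _ _ => sq_nonneg _)
  have hP0 : 0 ≤ ∑ l ∈ T, (s l)^2 := Finset.sum_nonneg fun l _ => sq_nonneg _
  have hSy : (∑ i, y i)^2 ≤ ∑ l ∈ T, (s l)^2 := by
    rw [hsumy, hsumyT]
    calc (∑ l ∈ T, s l * z l)^2 ≤ (∑ l ∈ T, (s l)^2) * (∑ l ∈ T, (z l)^2) := hCS
      _ ≤ (∑ l ∈ T, (s l)^2) * 1 := mul_le_mul_of_nonneg_left hTz1 hP0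
      _ = ∑ l ∈ T, (s l)^2 := mul_one _
  -- the key lower bound on ∑_T s²
  have hωR : (2:ℝ) ≤ (ω:ℝ) := by exact_mod_cast hω2
  have hω1 : (0:ℝ) < (ω:ℝ) - 1 := by linarith
  have hω0 : (0:ℝ) < (ω:ℝ) := by linarith
  have hfac : (0:ℝ) ≤ 1 - 1/(ω:ℝ) := by
    rw [sub_nonneg, div_le_one hω0]; linarith
  have hkey : (ω:ℝ)/((ω:ℝ)-1) * rho ≤ ∑ l ∈ T, (s l)^2 := by
    have h1 : rho ≤ (1 - 1/(ω:ℝ)) * (∑ l ∈ T, (s l)^2) :=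
      le_trans hMS (mul_le_mul_of_nonneg_left hSy hfac)
    have h2 : (ω:ℝ)/((ω:ℝ)-1) * rho
        ≤ (ω:ℝ)/((ω:ℝ)-1) * ((1 - 1/(ω:ℝ)) * (∑ l ∈ T, (s l)^2)) :=
      mul_le_mul_of_nonneg_left h1 (by positivity)
    have h3 : (ω:ℝ)/((ω:ℝ)-1) * (1 - 1/(ω:ℝ)) = 1 := by
      field_simp
    calc (ω:ℝ)/((ω:ℝ)-1) * rho
        ≤ (ω:ℝ)/((ω:ℝ)-1) * ((1 - 1/(ω:ℝ)) * (∑ l ∈ T, (s l)^2)) := h2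
      _ = ∑ l ∈ T, (s l)^2 := by rw [← mul_assoc, h3, one_mul]
  -- part 1
  have part1 : 2 * ((ω : ℝ) / ((ω : ℝ) - 1)) * rho ^ (2 * k + 2) ≤
      rho * (∑ i, ∑ l, ((G.adjMatrix ℝ) ^ (2 * k)) i l) +
        (∑ i, ∑ l, ((G.adjMatrix ℝ) ^ (2 * k + 1)) i l) := by
    rw [hwalk (2*k), hwalk (2*k+1)]
    have hRHS : rho * (∑ l, lam l ^ (2*k) * (s l)^2) + (∑ l, lam l ^ (2*k+1) * (s l)^2)
        = ∑ l, (rho * (lam l ^ (2*k) * (s l)^2) + lam l ^ (2*k+1) * (s l)^2) := by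
      rw [Finset.mul_sum, ← Finset.sum_add_distrib]
    rw [hRHS]
    have hterm_nonneg : ∀ l : Fin n,
        0 ≤ rho * (lam l ^ (2*k) * (s l)^2) + lam l ^ (2*k+1) * (s l)^2 := by
      intro l
      have hq : (0:ℝ) ≤ lam l ^ (2*k) := by
        rw [pow_mul]; exact pow_nonneg (sq_nonneg _) _
      have hrl : -rho ≤ lam l := by
        have := hub l; have := neg_abs_le (lam l); linarith
      have : rho * (lam l ^ (2*k) * (s l)^2) + lam l ^ (2*k+1) * (s l)^2
          = lam l ^ (2*k) * (s l)^2 * (rho + lam l) := by rw [pow_succ]; ring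
      rw [this]
      exact mul_nonneg (mul_nonneg hq (sq_nonneg _)) (by linarith)
    have hdrop : ∑ l ∈ T, (rho * (lam l ^ (2*k) * (s l)^2) + lam l ^ (2*k+1) * (s l)^2)
        ≤ ∑ l, (rho * (lam l ^ (2*k) * (s l)^2) + lam l ^ (2*k+1) * (s l)^2) :=
      Finset.sum_le_sum_of_subset_of_nonneg (Finset.subset_univ T)
        (fun l _ _ => hterm_nonneg l)
    have hTval : ∑ l ∈ T, (rho * (lam l ^ (2*k) * (s l)^2) + lam l ^ (2*k+1) * (s l)^2)
        = 2 * rho ^ (2*k+1) * ∑ l ∈ T, (s l)^2 := by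
      rw [Finset.mul_sum]
      refine Finset.sum_congr rfl fun l hl => ?_
      have hzl : z l ≠ 0 := by
        rw [hT] at hl; exact (Finset.mem_filter.mp hl).2
      rw [hTlam l hzl, pow_succ]
      ring
    have hfinal : 2 * ((ω : ℝ) / ((ω : ℝ) - 1)) * rho ^ (2 * k + 2)
        ≤ 2 * rho ^ (2*k+1) * ∑ l ∈ T, (s l)^2 := by
      have h2 : 0 ≤ 2 * rho ^ (2*k+1) := by positivity
      calc 2 * ((ω : ℝ) / ((ω : ℝ) - 1)) * rho ^ (2 * k + 2)
          = 2 * rho ^ (2*k+1) * ((ω:ℝ)/((ω:ℝ)-1) * rho) := by rw [pow_succ]; ring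
        _ ≤ 2 * rho ^ (2*k+1) * ∑ l ∈ T, (s l)^2 :=
            mul_le_mul_of_nonneg_left hkey h2
    linarith
  refine ⟨part1, ?_⟩
  -- part 2
  intro r hr
  set w0 : ℝ := ∑ i, ∑ l, ((G.adjMatrix ℝ) ^ (2*k)) i l with hw0def
  set w1 : ℝ := ∑ i, ∑ l, ((G.adjMatrix ℝ) ^ (2*k+1)) i l with hw1def
  set c : ℝ := 2 * ((ω : ℝ) / ((ω : ℝ) - 1)) with hcdef
  have hw0 : 0 ≤ w0 := Finset.sum_nonneg fun i _ => Finset.sum_nonneg fun l _ =>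
    stmt19_pow_entry_nonneg G _ i l
  have hw1 : 0 ≤ w1 := Finset.sum_nonneg fun i _ => Finset.sum_nonneg fun l _ =>
    stmt19_pow_entry_nonneg G _ i l
  have hc : 0 < c := by
    rw [hcdef]
    have h1 : (0:ℝ) < (ω:ℝ) - 1 := by linarith
    positivity
  exact stmt19_root_bound w0 w1 c rho hw0 hw1 hc k part1 r hr
end
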